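/- arXiv:2605.19467 — 6 statements merged into one kernel-verified Lean document; each statement's English description precedes it below -/
import Mathlib

section
/- For every k ≥ 1 the following identity holds: B_{k+1} − B_k = −η t_{k+1} ⟨x_{k+1} − x*, g_{k+1} + βAᵀ(Ax_{k+1} − b) + Aᵀλ*⟩ − t_{k+1}(t_{k+1} − η) ⟨x_{k+1} − x_k, g_{k+1} + βAᵀ(Ax_{k+1} − b) + Aᵀλ*⟩ − (1−η)(t_{k+1} − 1/2)‖z_{k+1} − z_k‖_M² − (t_{k+1}²/2)‖z_{k+1} − z̄_k‖_M², where z̄_k = (x̄_k, λ̄_k). -/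
open RealInnerProductSpace Filter

set_option maxHeartbeats 4000000 in
/-- Lemma 1 (energy identity for the inertial part). -/
theorem stmt_0
    {n m : ℕ}
    (f : EuclideanSpace ℝ (Fin n) → ℝ)
    (A : EuclideanSpace ℝ (Fin n) →L[ℝ] EuclideanSpace ℝ (Fin m))
    (b : EuclideanSpace ℝ (Fin m))
    (xs : EuclideanSpace ℝ (Fin n)) (ls : EuclideanSpace ℝ (Fin m))
    (hxs : A xs = b)
    (γ δ β η : ℝ) (hγ : 0 < γ) (hδ : 0 < δ) (hβ : 0 ≤ β) (hη : 0 < η)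
    (t : ℕ → ℝ) (htpos : ∀ k ≥ 1, 0 < t k)
    (g : ℕ → EuclideanSpace ℝ (Fin n))
    (x : ℕ → EuclideanSpace ℝ (Fin n))
    (lam : ℕ → EuclideanSpace ℝ (Fin m))
    (xbar : ℕ → EuclideanSpace ℝ (Fin n))
    (lbar : ℕ → EuclideanSpace ℝ (Fin m))
    (hxbar : ∀ k ≥ 1, xbar k = x k + ((t k - 1) / t (k+1)) • (x k - x (k-1)))
    (hlbar : ∀ k ≥ 1, lbar k = lam k + ((t k - 1) / t (k+1)) • (lam k - lam (k-1)))
    (hscheme1 : ∀ k ≥ 1,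
      x (k+1) - xbar k
        = (-γ) • (g (k+1)
            + (ContinuousLinearMap.adjoint A)
                (lam (k+1) + ((t (k+1) - η)/η) • (lam (k+1) - lam k))
            + β • (ContinuousLinearMap.adjoint A) (A (x (k+1)) - b)))
    (hscheme2 : ∀ k ≥ 1,
      lam (k+1) - lbar k
        = δ • ((A (x (k+1)) - b) + ((t (k+1) - η)/η) • (A (x (k+1) - x k))))
    (nM2 : EuclideanSpace ℝ (Fin n) × EuclideanSpace ℝ (Fin m) → ℝ)
    (hnM2 : ∀ z, nM2 z = (1/γ) * ‖z.1‖^2 + (1/δ) * ‖z.2‖^2)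
    (w : ℕ → EuclideanSpace ℝ (Fin n) × EuclideanSpace ℝ (Fin m))
    (hw : ∀ k, w k = η • ((x k, lam k) - (xs, ls))
        + (t k - 1) • ((x k, lam k) - (x (k-1), lam (k-1))))
    (B : ℕ → ℝ)
    (hB : ∀ k, B k = (1/2) * nM2 (w k)
        + (η * (1 - η) / 2) * nM2 ((x k, lam k) - (xs, ls))) :
    ∀ k ≥ 1,
      B (k+1) - B k
        = -(η * t (k+1)) * ⟪x (k+1) - xs,
              g (k+1) + β • (ContinuousLinearMap.adjoint A) (A (x (k+1)) - b)
                + (ContinuousLinearMap.adjoint A) ls⟫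
          - t (k+1) * (t (k+1) - η) * ⟪x (k+1) - x k,
              g (k+1) + β • (ContinuousLinearMap.adjoint A) (A (x (k+1)) - b)
                + (ContinuousLinearMap.adjoint A) ls⟫
          - (1 - η) * (t (k+1) - 1/2) * nM2 ((x (k+1), lam (k+1)) - (x k, lam k))
          - (t (k+1)^2 / 2) * nM2 ((x (k+1), lam (k+1)) - (xbar k, lbar k)) := by
  intro k hk
  have hT0 : 0 < t (k+1) := htpos (k+1) (by omega)
  have hT : t (k+1) ≠ 0 := ne_of_gt hT0
  have hη' : η ≠ 0 := ne_of_gt hη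
  have hγ' : γ ≠ 0 := ne_of_gt hγ
  have hδ' : δ ≠ 0 := ne_of_gt hδ
  set T := t (k+1) with hTdef
  set α := (T - η)/η with hαdef
  set u := x (k+1) - xs with hu
  set d := x (k+1) - x k with hd
  set μ := lam (k+1) - ls with hμ
  set e := lam (k+1) - lam k with he
  set Gp := g (k+1) + β • (ContinuousLinearMap.adjoint A) (A (x (k+1)) - b)
      + (ContinuousLinearMap.adjoint A) ls with hGp
  set G := Gp + (ContinuousLinearMap.adjoint A) μ + α • (ContinuousLinearMap.adjoint A) e with hGdef
  have hrAu : A (x (k+1)) - b = A u := by rw [hu, map_sub, hxs]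
  -- scheme 1 rewritten
  have hGeq : g (k+1) + (ContinuousLinearMap.adjoint A) (lam (k+1) + α • e)
      + β • (ContinuousLinearMap.adjoint A) (A (x (k+1)) - b) = G := by
    have hl : lam (k+1) + α • e = (μ + ls) + α • e := by rw [hμ]; abel
    rw [hl, hGdef, hGp]
    simp only [map_add, map_smul]
    abel
  have hxbar' : xbar k = x (k+1) + γ • G := by
    have h := hscheme1 k hk
    rw [hGeq] at h
    have : xbar k = x (k+1) - (-γ) • G := by rw [← h]; abel
    rw [this]; module
  have hlbar' : lbar k = lam (k+1) - δ • (A u + α • A d) := by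
    have h := hscheme2 k hk
    rw [hrAu] at h
    rw [← h]; abel
  have hpx : (t k - 1) • (x k - x (k-1)) = T • (xbar k - x k) := by
    rw [hxbar k hk, add_sub_cancel_left, smul_smul]
    congr 1
    field_simp
    rw [← hTdef, mul_div_assoc, div_self hT, mul_one]
  have hpl : (t k - 1) • (lam k - lam (k-1)) = T • (lbar k - lam k) := by
    rw [hlbar k hk, add_sub_cancel_left, smul_smul]
    congr 1
    field_simp
    rw [← hTdef, mul_div_assoc, div_self hT, mul_one]
  have hw1 : w (k+1) = (η • u + (T-1) • d, η • μ + (T-1) • e) := by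
    have h := hw (k+1)
    simp only [Nat.add_sub_cancel] at h
    rw [h, Prod.ext_iff]
    constructor
    · simp only [Prod.fst_sub, Prod.smul_fst, Prod.fst_add, Prod.mk_sub_mk]
      all_goals module
    · simp only [Prod.snd_sub, Prod.smul_snd, Prod.snd_add, Prod.mk_sub_mk]
      all_goals module
  have hw2 : w k = (η • u + (T - η) • d + (T*γ) • G,
      η • μ + (T - η) • e - (T*δ) • (A u + α • A d)) := by
    have h := hw k
    rw [h, Prod.ext_iff]
    constructor
    · simp only [Prod.fst_sub, Prod.smul_fst, Prod.fst_add, Prod.mk_sub_mk]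
      rw [show (η • (x k - xs) + (t k - 1) • (x k - x (k-1)) : EuclideanSpace ℝ (Fin n))
          = η • (x k - xs) + T • (xbar k - x k) by rw [hpx]]
      rw [hxbar', hu, hd]; module
    · simp only [Prod.snd_sub, Prod.smul_snd, Prod.snd_add, Prod.mk_sub_mk]
      rw [show (η • (lam k - ls) + (t k - 1) • (lam k - lam (k-1)) : EuclideanSpace ℝ (Fin m))
          = η • (lam k - ls) + T • (lbar k - lam k) by rw [hpl]]
      rw [hlbar', hμ, he]; module
  have h3 : (x (k+1), lam (k+1)) - (xbar k, lbar k)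
      = ((-γ) • G, δ • (A u + α • A d)) := by
    rw [hxbar', hlbar', Prod.ext_iff]
    constructor
    · simp only [Prod.mk_sub_mk]; module
    · simp only [Prod.mk_sub_mk]; module
  have h4 : (x (k+1), lam (k+1)) - (x k, lam k) = (d, e) := by
    rw [Prod.ext_iff]; exact ⟨hd.symm, he.symm⟩
  have h5 : (x (k+1), lam (k+1)) - (xs, ls) = (u, μ) := by
    rw [Prod.ext_iff]; exact ⟨hu.symm, hμ.symm⟩
  have h6 : (x k, lam k) - (xs, ls) = (u - d, μ - e) := by
    rw [Prod.ext_iff]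
    constructor
    · show x k - xs = u - d
      rw [hu, hd]; abel
    · show lam k - ls = μ - e
      rw [hμ, he]; abel
  rw [hB (k+1), hB k, hw1, hw2, h3, h4, h5, h6]
  simp only [hnM2]
  rw [hGdef]
  simp only [← real_inner_self_eq_norm_sq]
  simp only [inner_add_left, inner_add_right, inner_sub_left, inner_sub_right,
    real_inner_smul_left, real_inner_smul_right,
    ContinuousLinearMap.adjoint_inner_left, ContinuousLinearMap.adjoint_inner_right,
    map_add, map_smul]
  have hAA : ⟪μ, A ((ContinuousLinearMap.adjoint A) e)⟫ = ⟪e, A ((ContinuousLinearMap.adjoint A) μ)⟫ := by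
    rw [← ContinuousLinearMap.adjoint_inner_left, real_inner_comm,
      ContinuousLinearMap.adjoint_inner_left]
  simp only [real_inner_comm d u, real_inner_comm Gp u, real_inner_comm Gp d,
    real_inner_comm e μ, real_inner_comm (A u) μ, real_inner_comm (A u) e,
    real_inner_comm (A d) μ, real_inner_comm (A d) e,
    real_inner_comm (A Gp) μ, real_inner_comm (A Gp) e,
    real_inner_comm (A d) (A u), hAA]
  rw [hαdef]
  field_simp
  ring
end

section
/- The weighted sums Σ_{k=1}^{∞} (η − ρ) t_{k+1} (L_β(x_k,λ*) − L_β(x*,λ*)) and Σ_{k=1}^{∞} (1 − η) t_{k+1} ‖z_{k+1} − z_k‖_M² are both finite. -/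
open RealInnerProductSpace Filter Topology

section Helpers

variable {E : Type*} [NormedAddCommGroup E] [InnerProductSpace ℝ E]

/-- Core quadratic identity used in the Lyapunov analysis. -/
lemma stmt3_core_quad (T s η : ℝ) (p q r : E) :
    -⟪T•(p-q) - (s-1)•(q-r), T•(p-q) + η•q⟫
      = (1/2)*‖s•(q-r)+r‖^2 - (1/2)*‖T•(p-q)+q‖^2 - (1/2)*‖T•(p-q)-(s-1)•(q-r)‖^2
        + (1-η)*(T/2*(‖p‖^2-‖q‖^2-‖p-q‖^2) - (s-1)/2*(‖q‖^2-‖r‖^2+‖q-r‖^2)) := by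
  simp only [← real_inner_self_eq_norm_sq, inner_sub_left, inner_sub_right, inner_add_left,
    inner_add_right, real_inner_smul_left, real_inner_smul_right, real_inner_comm p q,
    real_inner_comm p r, real_inner_comm q r]
  ring

/-- One-sided quadratic estimate for each component space. -/
lemma stmt3_side (T s η : ℝ) (x2 x1 x0 xs v : E)
    (hv : T•v = T•(x2 - x1) - (s-1)•(x1 - x0)) :
    -(T*⟪v, T•(x2-x1) + η•(x1-xs)⟫) ≤
      (1/2)*‖s•(x1-x0)+(x0-xs)‖^2 - (1/2)*‖T•(x2-x1)+(x1-xs)‖^2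
      + (1-η)*(T/2*(‖x2-xs‖^2-‖x1-xs‖^2-‖x2-x1‖^2)
        - (s-1)/2*(‖x1-xs‖^2-‖x0-xs‖^2+‖x1-x0‖^2)) := by
  have h1 : -(T*⟪v, T•(x2-x1) + η•(x1-xs)⟫)
      = -⟪T•(x2-x1) - (s-1)•(x1-x0), T•(x2-x1) + η•(x1-xs)⟫ := by
    rw [← hv, real_inner_smul_left]
  rw [h1]
  have h2 : x2 - x1 = (x2 - xs) - (x1 - xs) := (sub_sub_sub_cancel_right _ _ _).symm
  have h3 : x1 - x0 = (x1 - xs) - (x0 - xs) := (sub_sub_sub_cancel_right _ _ _).symm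
  rw [h2, h3]
  rw [stmt3_core_quad T s η (x2 - xs) (x1 - xs) (x0 - xs)]
  have := sq_nonneg ‖T•((x2-xs)-(x1-xs)) - (s-1)•((x1-xs)-(x0-xs))‖
  linarith

lemma stmt3_psd_real (s u a b ip : ℝ) (hs : 1 ≤ s) (hu0 : 0 ≤ u) (hu1 : u < 1)
    (hip : ip ≤ a*b) :
    u*(s*a^2 - (s-1)*b^2) ≤ s^2*a^2 - 2*(s*(s-1))*ip + (s-1)^2*b^2 := by
  have hA : (0:ℝ) < s*(s-u) := mul_pos (by linarith) (by linarith)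
  have key : 0 ≤ s^2*a^2 - 2*(s*(s-1))*(a*b) + (s-1)^2*b^2 - u*s*a^2 + u*(s-1)*b^2 := by
    have expand : s*(s-u)*(s^2*a^2 - 2*(s*(s-1))*(a*b) + (s-1)^2*b^2 - u*s*a^2 + u*(s-1)*b^2)
        = (s*(s-u)*a - s*(s-1)*b)^2 + s*(s-1)*(u*(1-u))*b^2 := by ring
    have h0 : 0 ≤ (s*(s-u)*a - s*(s-1)*b)^2 + s*(s-1)*(u*(1-u))*b^2 :=
      add_nonneg (sq_nonneg _) (mul_nonneg (mul_nonneg (mul_nonneg (by linarith) (by linarith))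
        (mul_nonneg hu0 (by linarith))) (sq_nonneg b))
    have := expand ▸ h0
    exact nonneg_of_mul_nonneg_right this hA
  have hmul : 2*(s*(s-1))*ip ≤ 2*(s*(s-1))*(a*b) :=
    mul_le_mul_of_nonneg_left hip (by nlinarith)
  linarith

/-- Positive semidefiniteness of the quadratic part of the energy. -/
lemma stmt3_psd (s u : ℝ) (q r : E) (hs : 1 ≤ s) (hu0 : 0 ≤ u) (hu1 : u < 1) :
    u*(s*‖q‖^2 - (s-1)*‖r‖^2) ≤ ‖s•(q-r)+r‖^2 := by
  have h1 : s•(q-r)+r = s•q - (s-1)•r := by module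
  rw [h1]
  have h2 : ‖s•q - (s-1)•r‖^2 = s^2*‖q‖^2 - 2*(s*(s-1))*⟪q,r⟫ + (s-1)^2*‖r‖^2 := by
    simp only [← real_inner_self_eq_norm_sq, inner_sub_left, inner_sub_right,
      real_inner_smul_left, real_inner_smul_right, real_inner_comm q r]
    ring
  rw [h2]
  exact stmt3_psd_real s u ‖q‖ ‖r‖ _ hs hu0 hu1 (real_inner_le_norm q r)

/-- Gradient inequality for convex differentiable functions. -/
lemma stmt3_grad_convex {E : Type*} [NormedAddCommGroup E] [InnerProductSpace ℝ E]
    [CompleteSpace E] {f : E → ℝ} (hconv : ConvexOn ℝ Set.univ f) (hC1 : ContDiff ℝ 1 f)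
    (a b : E) : ⟪gradient f a, b - a⟫ ≤ f b - f a := by
  have hdiff : Differentiable ℝ f := hC1.differentiable one_ne_zero
  set d := b - a with hd
  have hline : HasDerivAt (fun s : ℝ => a + s • d) d 0 := by
    simpa using ((hasDerivAt_id (0:ℝ)).smul_const d).const_add a
  have hfd : HasFDerivAt f (InnerProductSpace.toDual ℝ E (gradient f a)) a :=
    hasGradientAt_iff_hasFDerivAt.mp (hdiff a).hasGradientAt
  have hg : HasDerivAt (fun s : ℝ => f (a + s • d)) ⟪gradient f a, d⟫ 0 := by
    have h0 : a + (0:ℝ) • d = a := by simp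
    have := (h0 ▸ hfd).comp_hasDerivAt 0 hline
    simpa [Function.comp_def] using this
  have key : ∀ s : ℝ, s ∈ Set.Ioc (0:ℝ) 1 → f (a + s • d) - f a ≤ s * (f b - f a) := by
    intro s hs
    have h := hconv.2 (Set.mem_univ a) (Set.mem_univ b)
      (by linarith [hs.2] : (0:ℝ) ≤ 1 - s) (le_of_lt hs.1) (by ring)
    have heq : (1-s)•a + s•b = a + s • d := by rw [hd]; module
    rw [heq] at h
    simp only [smul_eq_mul] at h; nlinarith [h]
  have hslope : Tendsto (fun s => (f (a + s•d) - f a)/s) (𝓝[>] (0:ℝ)) (𝓝 ⟪gradient f a, d⟫) := by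
    have h1 := hasDerivAt_iff_tendsto_slope.mp hg
    have h2 := h1.mono_left (nhdsWithin_mono _ (fun s hs => ne_of_gt hs : Set.Ioi (0:ℝ) ⊆ {(0:ℝ)}ᶜ))
    refine h2.congr' ?_
    filter_upwards [self_mem_nhdsWithin] with s hs
    simp [slope_def_field]
  have hfin : ⟪gradient f a, d⟫ ≤ f b - f a := by
    refine le_of_tendsto hslope ?_
    filter_upwards [Ioc_mem_nhdsGT_of_mem (Set.mem_Ico.mpr ⟨le_rfl, zero_lt_one⟩)] with s hs
    rw [div_le_iff₀ hs.1]
    calc f (a + s•d) - f a ≤ s * (f b - f a) := key s hs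
    _ = (f b - f a) * s := by ring
  exact hfin

end Helpers

set_option maxHeartbeats 1000000 in
/-- Theorem 1(i): weighted summability. -/
theorem stmt_3
    {n m : ℕ}
    (f : EuclideanSpace ℝ (Fin n) → ℝ)
    (hfconv : ConvexOn ℝ Set.univ f)
    (hfC1 : ContDiff ℝ 1 f)
    (A : EuclideanSpace ℝ (Fin n) →L[ℝ] EuclideanSpace ℝ (Fin m))
    (b : EuclideanSpace ℝ (Fin m))
    (ρ γ δ β η : ℝ)
    (hρ0 : 0 < ρ) (hρ1 : ρ ≤ 1)
    (hγ : 0 < γ) (hδ : 0 < δ) (hβ : 0 ≤ β)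
    (hηl : ρ ≤ η) (hηu : η ≤ 1)
    (t : ℕ → ℝ)
    (ht1 : t 1 = 1)
    (htmono : ∀ k ≥ 1, t k ≤ t (k+1))
    (htgt1 : ∀ k > 2, 1 < t k)
    (htinf : Filter.Tendsto t Filter.atTop Filter.atTop)
    (htgrow : ∀ k ≥ 1, t (k+1)^2 - t k^2 ≤ ρ * t (k+1))
    (x : ℕ → EuclideanSpace ℝ (Fin n))
    (lam : ℕ → EuclideanSpace ℝ (Fin m))
    (hx01 : x 0 = x 1) (hl01 : lam 0 = lam 1)
    (hscheme1 : ∀ k ≥ 1,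
      x (k+1) - (x k + ((t k - 1) / t (k+1)) • (x k - x (k-1)))
        = (-γ) • (gradient f (x (k+1))
            + (ContinuousLinearMap.adjoint A)
                (lam (k+1) + ((t (k+1) - η)/η) • (lam (k+1) - lam k))
            + β • (ContinuousLinearMap.adjoint A) (A (x (k+1)) - b)))
    (hscheme2 : ∀ k ≥ 1,
      lam (k+1) - (lam k + ((t k - 1) / t (k+1)) • (lam k - lam (k-1)))
        = δ • ((A (x (k+1)) - b) + ((t (k+1) - η)/η) • (A (x (k+1) - x k))))
    (xs : EuclideanSpace ℝ (Fin n)) (ls : EuclideanSpace ℝ (Fin m))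
    (hkkt1 : A xs = b)
    (hkkt2 : gradient f xs + (ContinuousLinearMap.adjoint A) ls = 0)
    (nM2 : EuclideanSpace ℝ (Fin n) × EuclideanSpace ℝ (Fin m) → ℝ)
    (hnM2 : ∀ z, nM2 z = (1/γ) * ‖z.1‖^2 + (1/δ) * ‖z.2‖^2) :
    Summable (fun k : ℕ => (η - ρ) * t (k+2) *
        ((f (x (k+1)) + ⟪ls, A (x (k+1)) - b⟫ + (β/2) * ‖A (x (k+1)) - b‖^2)
          - (f xs + ⟪ls, A xs - b⟫ + (β/2) * ‖A xs - b‖^2)))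
    ∧ Summable (fun k : ℕ => (1 - η) * t (k+2) *
        nM2 ((x (k+2), lam (k+2)) - (x (k+1), lam (k+1)))) := by
  have hη0 : 0 < η := lt_of_lt_of_le hρ0 hηl
  have hγ0 : (0:ℝ) ≤ 1/γ := le_of_lt (one_div_pos.mpr hγ)
  have hδ0 : (0:ℝ) ≤ 1/δ := le_of_lt (one_div_pos.mpr hδ)
  have ht1' : ∀ k : ℕ, 1 ≤ t (k+1) := by
    intro k
    induction k with
    | zero => simp [ht1]
    | succ k ih => exact le_trans ih (htmono (k+1) (Nat.le_add_left 1 k))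
  -- gradient inequality for the augmented Lagrangian in x
  have hφ : ∀ v y : EuclideanSpace ℝ (Fin n),
      ⟪gradient f v + (ContinuousLinearMap.adjoint A) ls
          + β • (ContinuousLinearMap.adjoint A) (A v - b), y - v⟫
        ≤ (f y + ⟪ls, A y - b⟫ + (β/2) * ‖A y - b‖^2)
          - (f v + ⟪ls, A v - b⟫ + (β/2) * ‖A v - b‖^2) := by
    intro v y
    have h1 : ⟪gradient f v, y - v⟫ ≤ f y - f v := stmt3_grad_convex hfconv hfC1 v y
    have h2 : ⟪(ContinuousLinearMap.adjoint A) ls, y - v⟫ = ⟪ls, A y - b⟫ - ⟪ls, A v - b⟫ := by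
      rw [ContinuousLinearMap.adjoint_inner_left,
        show A (y - v) = (A y - b) - (A v - b) by rw [map_sub]; abel, inner_sub_right]
    have h3 : ⟪β • (ContinuousLinearMap.adjoint A) (A v - b), y - v⟫
        ≤ (β/2) * ‖A y - b‖^2 - (β/2) * ‖A v - b‖^2 := by
      have hn : ‖A y - b‖^2 = ‖A v - b‖^2 + 2*⟪A v - b, A (y - v)⟫ + ‖A (y - v)‖^2 := by
        rw [show A y - b = (A v - b) + A (y - v) by rw [map_sub]; abel]
        exact norm_add_sq_real _ _
      rw [real_inner_smul_left, ContinuousLinearMap.adjoint_inner_left, hn]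
      have hbn : 0 ≤ β * ‖A (y - v)‖^2 := mul_nonneg hβ (sq_nonneg _)
      linarith
    rw [inner_add_left, inner_add_left, h2]
    linarith
  -- the primal gap
  set gap : ℕ → ℝ := fun k =>
    (f (x k) + ⟪ls, A (x k) - b⟫ + (β/2) * ‖A (x k) - b‖^2)
      - (f xs + ⟪ls, A xs - b⟫ + (β/2) * ‖A xs - b‖^2) with hgap
  have hgapnn : ∀ k : ℕ, 0 ≤ gap k := by
    intro k
    have hGz : gradient f xs + (ContinuousLinearMap.adjoint A) ls
        + β • (ContinuousLinearMap.adjoint A) (A xs - b) = 0 := by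
      rw [hkkt1, sub_self, map_zero, smul_zero, add_zero]; exact hkkt2
    have h := hφ xs (x k)
    rw [hGz, inner_zero_left] at h
    simp only [hgap]; linarith
  -- energy pieces
  set w : ℕ → ℝ := fun k => (1/γ)*‖x k - xs‖^2 + (1/δ)*‖lam k - ls‖^2 with hw
  set d2 : ℕ → ℝ := fun k => (1/γ)*‖x (k+1) - x k‖^2 + (1/δ)*‖lam (k+1) - lam k‖^2 with hd2
  set Nn : ℕ → ℝ := fun k =>
    (1/γ)*‖t (k+1)•(x (k+1) - x k) + (x k - xs)‖^2
      + (1/δ)*‖t (k+1)•(lam (k+1) - lam k) + (lam k - ls)‖^2 with hNn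
  set aa : ℕ → ℝ := fun k => (1-η)/2*(t (k+1)*w (k+1) - (t (k+1) - 1)*w k) with haa
  set En : ℕ → ℝ := fun k => t (k+1)^2 * gap (k+1) + Nn k / 2 - aa k with hEn
  clear_value gap w d2 Nn aa En
  -- energy is nonnegative
  have hEnnn : ∀ k : ℕ, 0 ≤ En k := by
    intro k
    have hs1 : 1 ≤ t (k+1) := ht1' k
    have b1 := stmt3_psd (t (k+1)) (1-η) (x (k+1) - xs) (x k - xs) hs1 (by linarith) (by linarith)
    have b2 := stmt3_psd (t (k+1)) (1-η) (lam (k+1) - ls) (lam k - ls) hs1 (by linarith) (by linarith)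
    rw [sub_sub_sub_cancel_right] at b1 b2
    have c1 := mul_le_mul_of_nonneg_left b1 hγ0
    have c2 := mul_le_mul_of_nonneg_left b2 hδ0
    have hg := mul_nonneg (sq_nonneg (t (k+1))) (hgapnn (k+1))
    simp only [hEn, hNn, haa, hw]
    linarith [c1, c2, hg]
  -- the per-step Lyapunov inequality
  have hstep : ∀ k : ℕ,
      En (k+1) + (η-ρ)*t (k+2)*gap (k+1) + (1-η)*t (k+2)/2*d2 (k+1) ≤ En k := by
    intro k
    have h1 : x (k+2) - (x (k+1) + ((t (k+1) - 1) / t (k+2)) • (x (k+1) - x k))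
        = (-γ) • (gradient f (x (k+2))
            + (ContinuousLinearMap.adjoint A)
                (lam (k+2) + ((t (k+2) - η)/η) • (lam (k+2) - lam (k+1)))
            + β • (ContinuousLinearMap.adjoint A) (A (x (k+2)) - b)) :=
      hscheme1 (k+1) (Nat.le_add_left 1 k)
    have h2 : lam (k+2) - (lam (k+1) + ((t (k+1) - 1) / t (k+2)) • (lam (k+1) - lam k))
        = δ • ((A (x (k+2)) - b) + ((t (k+2) - η)/η) • (A (x (k+2) - x (k+1)))) :=
      hscheme2 (k+1) (Nat.le_add_left 1 k)
    have hgr : t (k+2)^2 - t (k+1)^2 ≤ ρ * t (k+2) := htgrow (k+1) (Nat.le_add_left 1 k)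
    have hT1 : 1 ≤ t (k+2) := ht1' (k+1)
    have hs1 : 1 ≤ t (k+1) := ht1' k
    have hTne : t (k+2) ≠ 0 := by linarith
    have hηa : η * ((t (k+2) - η)/η) = t (k+2) - η := by field_simp
    -- G-form of the first scheme equation
    have hG : gradient f (x (k+2)) + (ContinuousLinearMap.adjoint A) ls
        + β • (ContinuousLinearMap.adjoint A) (A (x (k+2)) - b)
        = (-(1/γ)) • (x (k+2) - (x (k+1) + ((t (k+1) - 1) / t (k+2)) • (x (k+1) - x k)))
          - (ContinuousLinearMap.adjoint A)
              ((lam (k+2) + ((t (k+2) - η)/η) • (lam (k+2) - lam (k+1))) - ls) := by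
      have hS : gradient f (x (k+2))
          + (ContinuousLinearMap.adjoint A)
              (lam (k+2) + ((t (k+2) - η)/η) • (lam (k+2) - lam (k+1)))
          + β • (ContinuousLinearMap.adjoint A) (A (x (k+2)) - b)
          = (-(1/γ)) • (x (k+2) - (x (k+1) + ((t (k+1) - 1) / t (k+2)) • (x (k+1) - x k))) := by
        rw [h1, smul_smul, show (-(1/γ))*(-γ) = 1 by field_simp, one_smul]
      rw [show (ContinuousLinearMap.adjoint A)
            ((lam (k+2) + ((t (k+2) - η)/η) • (lam (k+2) - lam (k+1))) - ls)
          = (ContinuousLinearMap.adjoint A)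
              (lam (k+2) + ((t (k+2) - η)/η) • (lam (k+2) - lam (k+1)))
            - (ContinuousLinearMap.adjoint A) ls from map_sub _ _ _, ← hS]
      abel
    -- inertial difference identities
    have hvx : t (k+2) • (x (k+2) - (x (k+1) + ((t (k+1) - 1) / t (k+2)) • (x (k+1) - x k)))
        = t (k+2)•(x (k+2) - x (k+1)) - (t (k+1) - 1)•(x (k+1) - x k) := by
      have hc : t (k+2) * ((t (k+1) - 1)/t (k+2)) = t (k+1) - 1 := by field_simp
      rw [show t (k+2) • (x (k+2) - (x (k+1) + ((t (k+1) - 1) / t (k+2)) • (x (k+1) - x k)))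
          = t (k+2)•(x (k+2) - x (k+1))
            - (t (k+2) * ((t (k+1) - 1)/t (k+2)))•(x (k+1) - x k) by module, hc]
    have hvl : t (k+2) • (lam (k+2) - (lam (k+1) + ((t (k+1) - 1) / t (k+2)) • (lam (k+1) - lam k)))
        = t (k+2)•(lam (k+2) - lam (k+1)) - (t (k+1) - 1)•(lam (k+1) - lam k) := by
      have hc : t (k+2) * ((t (k+1) - 1)/t (k+2)) = t (k+1) - 1 := by field_simp
      rw [show t (k+2) • (lam (k+2) - (lam (k+1) + ((t (k+1) - 1) / t (k+2)) • (lam (k+1) - lam k)))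
          = t (k+2)•(lam (k+2) - lam (k+1))
            - (t (k+2) * ((t (k+1) - 1)/t (k+2)))•(lam (k+1) - lam k) by module, hc]
    -- dual identity
    have hApX : A (t (k+2)•(x (k+2) - x (k+1)) + η•(x (k+1) - xs))
        = η • ((A (x (k+2)) - b) + ((t (k+2) - η)/η) • (A (x (k+2) - x (k+1)))) := by
      have e1 : A (x (k+2) - x (k+1)) = A (x (k+2)) - A (x (k+1)) := map_sub A _ _
      have e2 : A (x (k+1) - xs) = A (x (k+1)) - A xs := map_sub A _ _
      rw [map_add, map_smul, map_smul, e2, hkkt1, smul_add, smul_smul, hηa, e1]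
      module
    have hσ : (A (x (k+2)) - b) + ((t (k+2) - η)/η) • (A (x (k+2) - x (k+1)))
        = (1/δ) • (lam (k+2) - (lam (k+1) + ((t (k+1) - 1) / t (k+2)) • (lam (k+1) - lam k))) := by
      rw [h2, smul_smul, show (1/δ)*δ = 1 by field_simp, one_smul]
    have hμ : η • ((lam (k+2) + ((t (k+2) - η)/η) • (lam (k+2) - lam (k+1))) - ls)
        = t (k+2)•(lam (k+2) - lam (k+1)) + η•(lam (k+1) - ls) := by
      rw [smul_sub, smul_add, smul_smul, hηa]; module
    have hd1 : ⟪(ContinuousLinearMap.adjoint A)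
          ((lam (k+2) + ((t (k+2) - η)/η) • (lam (k+2) - lam (k+1))) - ls),
          t (k+2)•(x (k+2) - x (k+1)) + η•(x (k+1) - xs)⟫
        = (1/δ)*⟪lam (k+2) - (lam (k+1) + ((t (k+1) - 1) / t (k+2)) • (lam (k+1) - lam k)),
            t (k+2)•(lam (k+2) - lam (k+1)) + η•(lam (k+1) - ls)⟫ := by
      rw [ContinuousLinearMap.adjoint_inner_left, hApX, hσ]
      rw [real_inner_smul_right, real_inner_smul_right]
      conv_rhs => rw [← hμ, real_inner_smul_right]
      rw [real_inner_comm]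
      ring
    -- convexity inequalities
    have hconv1 : gap (k+2) ≤ ⟪gradient f (x (k+2)) + (ContinuousLinearMap.adjoint A) ls
        + β • (ContinuousLinearMap.adjoint A) (A (x (k+2)) - b), x (k+2) - xs⟫ := by
      have h4 := hφ (x (k+2)) xs
      rw [show xs - x (k+2) = -(x (k+2) - xs) by abel, inner_neg_right] at h4
      simp only [hgap]; linarith
    have hconv2 : gap (k+2) - gap (k+1)
        ≤ ⟪gradient f (x (k+2)) + (ContinuousLinearMap.adjoint A) ls
          + β • (ContinuousLinearMap.adjoint A) (A (x (k+2)) - b), x (k+2) - x (k+1)⟫ := by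
      have h4 := hφ (x (k+2)) (x (k+1))
      rw [show x (k+1) - x (k+2) = -(x (k+2) - x (k+1)) by abel, inner_neg_right] at h4
      simp only [hgap]; linarith
    have hsum1 : t (k+2)*η*⟪gradient f (x (k+2)) + (ContinuousLinearMap.adjoint A) ls
          + β • (ContinuousLinearMap.adjoint A) (A (x (k+2)) - b), x (k+2) - xs⟫
        + t (k+2)*(t (k+2)-η)*⟪gradient f (x (k+2)) + (ContinuousLinearMap.adjoint A) ls
          + β • (ContinuousLinearMap.adjoint A) (A (x (k+2)) - b), x (k+2) - x (k+1)⟫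
        = t (k+2)*⟪gradient f (x (k+2)) + (ContinuousLinearMap.adjoint A) ls
          + β • (ContinuousLinearMap.adjoint A) (A (x (k+2)) - b),
          t (k+2)•(x (k+2) - x (k+1)) + η•(x (k+1) - xs)⟫ := by
      rw [show t (k+2)•(x (k+2) - x (k+1)) + η•(x (k+1) - xs)
          = η•(x (k+2) - xs) + (t (k+2)-η)•(x (k+2) - x (k+1)) by module,
        inner_add_right, real_inner_smul_right, real_inner_smul_right]
      ring
    have hmain : t (k+2)^2*gap (k+2) - t (k+2)*(t (k+2)-η)*gap (k+1)
        ≤ t (k+2)*⟪gradient f (x (k+2)) + (ContinuousLinearMap.adjoint A) ls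
          + β • (ContinuousLinearMap.adjoint A) (A (x (k+2)) - b),
          t (k+2)•(x (k+2) - x (k+1)) + η•(x (k+1) - xs)⟫ := by
      have m1 : (0:ℝ) ≤ t (k+2)*η := mul_nonneg (by linarith) (le_of_lt hη0)
      have m2 : (0:ℝ) ≤ t (k+2)*(t (k+2)-η) := mul_nonneg (by linarith) (by linarith)
      have i1 := mul_le_mul_of_nonneg_left hconv1 m1
      have i2 := mul_le_mul_of_nonneg_left hconv2 m2
      rw [← hsum1]
      linarith
    have hpair : t (k+2)*⟪gradient f (x (k+2)) + (ContinuousLinearMap.adjoint A) ls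
          + β • (ContinuousLinearMap.adjoint A) (A (x (k+2)) - b),
          t (k+2)•(x (k+2) - x (k+1)) + η•(x (k+1) - xs)⟫
        = (1/γ)*(-(t (k+2)*⟪x (k+2) - (x (k+1) + ((t (k+1) - 1) / t (k+2)) • (x (k+1) - x k)),
              t (k+2)•(x (k+2) - x (k+1)) + η•(x (k+1) - xs)⟫))
          + (1/δ)*(-(t (k+2)*⟪lam (k+2) - (lam (k+1) + ((t (k+1) - 1) / t (k+2)) • (lam (k+1) - lam k)),
              t (k+2)•(lam (k+2) - lam (k+1)) + η•(lam (k+1) - ls)⟫)) := by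
      rw [hG, inner_sub_left, real_inner_smul_left, hd1]
      ring
    have hside1 := stmt3_side (t (k+2)) (t (k+1)) η (x (k+2)) (x (k+1)) (x k) xs _ hvx
    have hside2 := stmt3_side (t (k+2)) (t (k+1)) η (lam (k+2)) (lam (k+1)) (lam k) ls _ hvl
    have j1 := mul_le_mul_of_nonneg_left hside1 hγ0
    have j2 := mul_le_mul_of_nonneg_left hside2 hδ0
    have hfin := le_trans hmain (le_trans (le_of_eq hpair) (add_le_add j1 j2))
    have hgr' := mul_le_mul_of_nonneg_right hgr (hgapnn (k+1))
    have hl1 : (0:ℝ) ≤ (1-η)*((t (k+1)-1)/2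
        *((1/γ)*‖x (k+1) - x k‖^2 + (1/δ)*‖lam (k+1) - lam k‖^2)) :=
      mul_nonneg (by linarith) (mul_nonneg (by linarith)
        (add_nonneg (mul_nonneg hγ0 (sq_nonneg _)) (mul_nonneg hδ0 (sq_nonneg _))))
    simp only [hEn, hNn, haa, hw, hd2]
    simp only [show k+1+1 = k+2 from rfl]
    linarith [hfin, hgr', hl1]
  -- telescoping
  have htel : ∀ K : ℕ, (∑ i ∈ Finset.range K,
      ((η-ρ)*t (i+2)*gap (i+1) + (1-η)*t (i+2)/2*d2 (i+1))) + En K ≤ En 0 := by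
    intro K
    induction K with
    | zero => simp
    | succ K ih =>
      rw [Finset.sum_range_succ]
      have := hstep K
      linarith
  have hq1 : ∀ i : ℕ, 0 ≤ (η-ρ)*t (i+2)*gap (i+1) := fun i =>
    mul_nonneg (mul_nonneg (by linarith) (by linarith [ht1' (i+1)])) (hgapnn (i+1))
  have hd2nn : ∀ i : ℕ, 0 ≤ d2 i := by
    intro i; simp only [hd2]
    exact add_nonneg (mul_nonneg hγ0 (sq_nonneg _)) (mul_nonneg hδ0 (sq_nonneg _))
  have hq2 : ∀ i : ℕ, 0 ≤ (1-η)*t (i+2)/2*d2 (i+1) := fun i =>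
    mul_nonneg (div_nonneg (mul_nonneg (by linarith) (by linarith [ht1' (i+1)])) (by norm_num))
      (hd2nn (i+1))
  have hb1 : ∀ K : ℕ, ∑ i ∈ Finset.range K, (η-ρ)*t (i+2)*gap (i+1) ≤ En 0 := by
    intro K
    have h := htel K
    have h2 : ∑ i ∈ Finset.range K, (η-ρ)*t (i+2)*gap (i+1)
        ≤ ∑ i ∈ Finset.range K, ((η-ρ)*t (i+2)*gap (i+1) + (1-η)*t (i+2)/2*d2 (i+1)) :=
      Finset.sum_le_sum (fun i _ => by linarith [hq2 i])
    linarith [hEnnn K]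
  have hb2 : ∀ K : ℕ, ∑ i ∈ Finset.range K, (1-η)*t (i+2)/2*d2 (i+1) ≤ En 0 := by
    intro K
    have h := htel K
    have h2 : ∑ i ∈ Finset.range K, (1-η)*t (i+2)/2*d2 (i+1)
        ≤ ∑ i ∈ Finset.range K, ((η-ρ)*t (i+2)*gap (i+1) + (1-η)*t (i+2)/2*d2 (i+1)) :=
      Finset.sum_le_sum (fun i _ => by linarith [hq1 i])
    linarith [hEnnn K]
  constructor
  · have S1 := summable_of_sum_range_le hq1 hb1
    simpa only [hgap] using S1
  · have S2 := (summable_of_sum_range_le hq2 hb2).mul_left 2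
    have hfun : (fun k : ℕ => (1-η)*t (k+2)*nM2 ((x (k+2), lam (k+2)) - (x (k+1), lam (k+1))))
        = (fun i : ℕ => 2*((1-η)*t (i+2)/2*d2 (i+1))) := by
      funext i
      rw [hnM2]
      simp only [hd2, Prod.mk_sub_mk]
      simp only [show i+1+1 = i+2 from rfl]
      ring
    rw [hfun]; exact S2
end

section
/- There exists a constant C > 0 such that for all k ≥ 1 the feasibility violation and the objective residual satisfy ‖Ax_k − b‖ ≤ C/t_k² and |f(x_k) − f(x*)| ≤ (E_1 + ‖λ*‖C + βC²/2)/t_k², where E_1 = L_β(x_1,λ*) − L_β(x*,λ*) + (η/(2γ))‖x_1 − x*‖² + (η/(2δ))‖λ_1 − λ*‖². -/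
set_option maxHeartbeats 4000000

open RealInnerProductSpace Filter Topology

section auxiliary_lemmas_for_stmt6

lemma grad_convex_ineq {E : Type*} [NormedAddCommGroup E] [InnerProductSpace ℝ E]
    [CompleteSpace E] {f : E → ℝ} (hf : ConvexOn ℝ Set.univ f)
    {u g : E} (hg : HasGradientAt f g u) (z : E) :
    ⟪g, z - u⟫ ≤ f z - f u := by
  have hline : HasDerivAt (fun s : ℝ => u + s • (z - u)) (z - u) 0 := by
    simpa using ((hasDerivAt_id (0:ℝ)).smul_const (z - u)).const_add u
  have hg' : HasFDerivAt f ((InnerProductSpace.toDual ℝ E) g) (u + (0:ℝ) • (z - u)) := by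
    simpa using hg.hasFDerivAt
  have hφ : HasDerivAt (fun s : ℝ => f (u + s • (z - u))) ⟪g, z - u⟫ 0 := by
    have := (hg'.comp 0 hline.hasFDerivAt).hasDerivAt
    simp [InnerProductSpace.toDual] at this
    exact this
  have key : ∀ s : ℝ, s ∈ Set.Ioo (0:ℝ) 1 →
      slope (fun s : ℝ => f (u + s • (z - u))) 0 s ≤ f z - f u := by
    intro s hs
    have hcvx := hf.2 (Set.mem_univ u) (Set.mem_univ z)
      (by linarith [hs.1, hs.2] : (0:ℝ) ≤ 1 - s) (le_of_lt hs.1) (by ring : (1 - s) + s = 1)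
    have h1 : (1 - s) • u + s • z = u + s • (z - u) := by module
    rw [h1] at hcvx
    simp only [smul_eq_mul] at hcvx
    rw [slope_def_field]
    simp only [zero_smul, add_zero, sub_zero]
    rw [div_le_iff₀ hs.1]
    nlinarith [hs.1, hs.2, hcvx]
  have htend : Tendsto (slope (fun s : ℝ => f (u + s • (z - u))) 0) (𝓝[>] (0:ℝ))
      (𝓝 ⟪g, z - u⟫) := by
    have h := hasDerivAt_iff_tendsto_slope.mp hφ
    exact h.mono_left (nhdsWithin_mono _ (fun x hx => ne_of_gt hx))
  refine le_of_tendsto htend ?_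
  filter_upwards [Ioo_mem_nhdsGT_of_mem (by norm_num : (0:ℝ) ∈ Set.Ico (0:ℝ) 1)] with s hs
  exact key s hs



variable {E : Type*} [NormedAddCommGroup E] [InnerProductSpace ℝ E]

lemma exp2 (p q : E) (c1 c2 : ℝ) :
    ‖c1 • p + c2 • q‖^2 = c1^2*‖p‖^2 + c2^2*‖q‖^2 + 2*(c1*c2)*⟪p,q⟫ := by
  simp only [← real_inner_self_eq_norm_sq, inner_add_left, inner_add_right,
    real_inner_smul_left, real_inner_smul_right]
  rw [real_inner_comm q p]; ring

lemma exp3 (p q s : E) (c1 c2 c3 : ℝ) :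
    ‖c1 • p + c2 • q + c3 • s‖^2 = c1^2*‖p‖^2 + c2^2*‖q‖^2 + c3^2*‖s‖^2
      + 2*(c1*c2)*⟪p,q⟫ + 2*(c1*c3)*⟪p,s⟫ + 2*(c2*c3)*⟪q,s⟫ := by
  simp only [← real_inner_self_eq_norm_sq, inner_add_left, inner_add_right,
    real_inner_smul_left, real_inner_smul_right]
  rw [real_inner_comm q p, real_inner_comm s p, real_inner_comm s q]; ring

lemma expi3 (v p q s : E) (c1 c2 c3 : ℝ) :
    ⟪v, c1 • p + c2 • q + c3 • s⟫ = c1*⟪p,v⟫ + c2*⟪q,v⟫ + c3*⟪s,v⟫ := by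
  simp only [inner_add_right, real_inner_smul_right]
  rw [real_inner_comm p v, real_inner_comm q v, real_inner_comm s v]

lemma norm_smul_sq (c : ℝ) (v : E) : ‖c • v‖^2 = c^2 * ‖v‖^2 := by
  rw [norm_smul]; simp [mul_pow, sq_abs]



lemma psi_grad_ineq {E F : Type*} [NormedAddCommGroup E] [InnerProductSpace ℝ E]
    [NormedAddCommGroup F] [InnerProductSpace ℝ F] [CompleteSpace E] [CompleteSpace F]
    {f : E → ℝ} (hf : ConvexOn ℝ Set.univ f)
    (A : E →L[ℝ] F) (b ls : F) {β : ℝ} (hβ : 0 ≤ β)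
    {u g : E} (hg : HasGradientAt f g u) (z : E) :
    ⟪g + (ContinuousLinearMap.adjoint A) ls + β • (ContinuousLinearMap.adjoint A) (A u - b),
      z - u⟫ ≤
    (f z + ⟪ls, A z - b⟫ + β/2 * ‖A z - b‖^2) - (f u + ⟪ls, A u - b⟫ + β/2 * ‖A u - b‖^2) := by
  have h1 : ⟪g, z - u⟫ ≤ f z - f u := grad_convex_ineq hf hg z
  have h2 : ⟪(ContinuousLinearMap.adjoint A) ls, z - u⟫ = ⟪ls, A z - b⟫ - ⟪ls, A u - b⟫ := by
    rw [ContinuousLinearMap.adjoint_inner_left, map_sub, ← inner_sub_right]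
    congr 1; abel
  have h3 : ⟪β • (ContinuousLinearMap.adjoint A) (A u - b), z - u⟫ ≤
      β/2 * ‖A z - b‖^2 - β/2 * ‖A u - b‖^2 := by
    rw [real_inner_smul_left, ContinuousLinearMap.adjoint_inner_left]
    have hd : A z - b = (A u - b) + (A (z - u)) := by rw [map_sub]; abel
    have hsq : ‖A z - b‖^2 = ‖A u - b‖^2 + 2 * ⟪A u - b, A (z - u)⟫ + ‖A (z - u)‖^2 := by
      rw [hd, norm_add_sq_real]
    nlinarith [sq_nonneg ‖A (z - u)‖, mul_nonneg hβ (sq_nonneg ‖A (z - u)‖)]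
  calc ⟪g + (ContinuousLinearMap.adjoint A) ls + β • (ContinuousLinearMap.adjoint A) (A u - b), z - u⟫
      = ⟪g, z - u⟫ + ⟪(ContinuousLinearMap.adjoint A) ls, z - u⟫
        + ⟪β • (ContinuousLinearMap.adjoint A) (A u - b), z - u⟫ := by
        rw [inner_add_left, inner_add_left]
    _ ≤ _ := by rw [h2]; linarith

section step
variable {E F : Type*} [NormedAddCommGroup E] [InnerProductSpace ℝ E]
    [NormedAddCommGroup F] [InnerProductSpace ℝ F] [CompleteSpace E] [CompleteSpace F]

/-- One-step energy decrease and dual-residual recursion. -/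
lemma step_lemma
    (A : E →L[ℝ] F) (b ls : F) (xs : E) (hxs : A xs = b)
    {f : E → ℝ} (hf : ConvexOn ℝ Set.univ f)
    {η γ δ β t0 t1 : ℝ} (hη0 : 0 < η) (hηu : η ≤ 1) (hγ : 0 < γ) (hδ : 0 < δ) (hβ : 0 ≤ β)
    (ht0 : 1 ≤ t0) (ht01 : t0 ≤ t1) (hgrow : t1^2 - t0^2 ≤ η*t1)
    (xm x0 x1 : E) (lm l0 l1 : F) {gx1 : E} (hgx1 : HasGradientAt f gx1 x1)
    (hs1 : x1 - (x0 + ((t0-1)/t1) • (x0-xm))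
        = (-γ) • (gx1 + (ContinuousLinearMap.adjoint A) (l1 + ((t1-η)/η) • (l1-l0))
            + β • (ContinuousLinearMap.adjoint A) (A x1 - b)))
    (hs2 : l1 - (l0 + ((t0-1)/t1) • (l0-lm)) = δ • ((A x1 - b) + ((t1-η)/η) • (A (x1-x0))))
    (hφ0 : 0 ≤ (f x0 + ⟪ls, A x0 - b⟫ + β/2*‖A x0 - b‖^2)
        - (f xs + ⟪ls, A xs - b⟫ + β/2*‖A xs - b‖^2)) :
    (2*γ*δ*η^2*t1^2*((f x1 + ⟪ls, A x1 - b⟫ + β/2*‖A x1 - b‖^2)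
        - (f xs + ⟪ls, A xs - b⟫ + β/2*‖A xs - b‖^2))
      + δ*η^2*‖η•(x0-xs) + t1•(x1-x0)‖^2 + γ*η^2*‖η•(l0-ls) + t1•(l1-l0)‖^2
      + δ*η^3*(1-η)*‖x0-xs‖^2 + γ*η^3*(1-η)*‖l0-ls‖^2)
    ≤ (2*γ*δ*η^2*t0^2*((f x0 + ⟪ls, A x0 - b⟫ + β/2*‖A x0 - b‖^2)
        - (f xs + ⟪ls, A xs - b⟫ + β/2*‖A xs - b‖^2))
      + δ*η^2*‖η•(xm-xs) + t0•(x0-xm)‖^2 + γ*η^2*‖η•(lm-ls) + t0•(l0-lm)‖^2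
      + δ*η^3*(1-η)*‖xm-xs‖^2 + γ*η^3*(1-η)*‖lm-ls‖^2)
    ∧ ((η•(l0-ls) + t1•(l1-l0)) + (1-η)•(l0-ls) - ((δ*t1^2)/η)•(A x1 - b)
      = ((η•(lm-ls) + t0•(l0-lm)) + (1-η)•(lm-ls) - ((δ*t0^2)/η)•(A x0 - b))
        + ((δ*(t0^2 + η*t1 - t1^2))/η)•(A x0 - b)) := by
  have ht1 : (1:ℝ) ≤ t1 := le_trans ht0 ht01
  have ht1p : (0:ℝ) < t1 := lt_of_lt_of_le one_pos ht1
  have ht1n : t1 ≠ 0 := ne_of_gt ht1p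
  have hηn : η ≠ 0 := ne_of_gt hη0
  set G := gx1 + (ContinuousLinearMap.adjoint A) (l1 + ((t1-η)/η) • (l1-l0))
      + β • (ContinuousLinearMap.adjoint A) (A x1 - b) with hGdef
  set Rt := η • (A x1 - b) + (t1-η) • (A x1 - A x0) with hRtdef
  -- rearranged schemes
  have hs1' : x1 - x0 = ((t0-1)/t1) • (x0-xm) + (-γ) • G := by
    rw [← hs1]; abel
  have hAd : A (x1 - x0) = A x1 - A x0 := by rw [map_sub]
  have hs2' : l1 - l0 = ((t0-1)/t1) • (l0-lm) + (δ/η) • Rt := by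
    have h0 : l1 - l0 = ((t0-1)/t1) • (l0-lm) + δ • ((A x1 - b) + ((t1-η)/η) • (A x1 - A x0)) := by
      rw [← hAd, ← hs2]; abel
    rw [h0, hRtdef]
    match_scalars <;> field_simp
  -- expansions of the new primal/dual aggregates
  have hv' : η•(x0-xs) + t1•(x1-x0) = η•(xm-xs) + (η+t0-1)•(x0-xm) + (-(γ*t1))•G := by
    rw [hs1']
    match_scalars <;> (try field_simp) <;> (try ring) <;> tauto
  have hw' : η•(l0-ls) + t1•(l1-l0) = η•(lm-ls) + (η+t0-1)•(l0-lm) + ((δ*t1)/η)•Rt := by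
    rw [hs2']
    match_scalars <;> (try field_simp) <;> (try ring) <;> tauto
  -- scalar expansions
  have E1 : ‖η•(xm-xs) + t0•(x0-xm)‖^2
      = η^2*‖xm-xs‖^2 + t0^2*‖x0-xm‖^2 + 2*(η*t0)*⟪xm-xs,x0-xm⟫ := exp2 _ _ _ _
  have E2 : ‖η•(x0-xs) + t1•(x1-x0)‖^2
      = η^2*‖xm-xs‖^2 + (η+t0-1)^2*‖x0-xm‖^2 + (-(γ*t1))^2*‖G‖^2
        + 2*(η*(η+t0-1))*⟪xm-xs,x0-xm⟫ + 2*(η*(-(γ*t1)))*⟪xm-xs,G⟫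
        + 2*((η+t0-1)*(-(γ*t1)))*⟪x0-xm,G⟫ := by rw [hv', exp3]
  have EX : ‖x0-xs‖^2 = ‖xm-xs‖^2 + 2*⟪xm-xs,x0-xm⟫ + ‖x0-xm‖^2 := by
    rw [show x0-xs = (xm-xs)+(x0-xm) from by abel, norm_add_sq_real]
  have EG : ⟪G, η•(x0-xs) + t1•(x1-x0)⟫
      = η*⟪xm-xs,G⟫ + (η+t0-1)*⟪x0-xm,G⟫ + (-(γ*t1))*‖G‖^2 := by
    rw [hv', expi3, real_inner_self_eq_norm_sq]
  have hw'η : η•(η•(l0-ls) + t1•(l1-l0))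
      = (η^2)•(lm-ls) + (η*(η+t0-1))•(l0-lm) + (δ*t1)•Rt := by
    rw [hw']
    match_scalars <;> (try field_simp) <;> (try ring) <;> tauto
  have F1 : ‖η•(lm-ls) + t0•(l0-lm)‖^2
      = η^2*‖lm-ls‖^2 + t0^2*‖l0-lm‖^2 + 2*(η*t0)*⟪lm-ls,l0-lm⟫ := exp2 _ _ _ _
  have F2s : η^2*‖η•(l0-ls) + t1•(l1-l0)‖^2
      = (η^2)^2*‖lm-ls‖^2 + (η*(η+t0-1))^2*‖l0-lm‖^2 + (δ*t1)^2*‖Rt‖^2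
        + 2*(η^2*(η*(η+t0-1)))*⟪lm-ls,l0-lm⟫ + 2*(η^2*(δ*t1))*⟪lm-ls,Rt⟫
        + 2*((η*(η+t0-1))*(δ*t1))*⟪l0-lm,Rt⟫ := by
    rw [← norm_smul_sq, hw'η, exp3]
  have EL : ‖l0-ls‖^2 = ‖lm-ls‖^2 + 2*⟪lm-ls,l0-lm⟫ + ‖l0-lm‖^2 := by
    rw [show l0-ls = (lm-ls)+(l0-lm) from by abel, norm_add_sq_real]
  have ERws : η*⟪Rt, η•(l0-ls) + t1•(l1-l0)⟫
      = η^2*⟪lm-ls,Rt⟫ + (η*(η+t0-1))*⟪l0-lm,Rt⟫ + (δ*t1)*‖Rt‖^2 := by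
    rw [← real_inner_smul_right, hw'η, expi3, real_inner_self_eq_norm_sq]
  -- key3v : connect G with gψ and the dual residual
  set gψ := gx1 + (ContinuousLinearMap.adjoint A) ls
      + β • (ContinuousLinearMap.adjoint A) (A x1 - b) with hgψ
  set wq := (l1-ls) + ((t1-η)/η)•(l1-l0) with hwq
  have hGsplit : G = gψ + (ContinuousLinearMap.adjoint A) wq := by
    rw [hGdef, hgψ, hwq, show l1 + ((t1-η)/η)•(l1-l0) = ls + ((l1-ls) + ((t1-η)/η)•(l1-l0))
      from by module, map_add]
    abel
  have hwqs : η • wq = η•(l0-ls) + t1•(l1-l0) := by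
    rw [hwq]
    match_scalars <;> (try field_simp) <;> (try ring) <;> tauto
  have hAv : A (η•(x0-xs) + t1•(x1-x0)) = Rt := by
    rw [hRtdef]
    simp only [map_add, map_smul, map_sub, hxs]
    module
  have hv2 : η•(x0-xs) + t1•(x1-x0) = η•(x1-xs) + (t1-η)•(x1-x0) := by module
  have key3v : η*⟪G, η•(x0-xs) + t1•(x1-x0)⟫
      = η^2*⟪gψ, x1-xs⟫ + (η*(t1-η))*⟪gψ, x1-x0⟫ + ⟪Rt, η•(l0-ls) + t1•(l1-l0)⟫ := by
    have e1 : ⟪G, η•(x0-xs) + t1•(x1-x0)⟫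
        = ⟪gψ, η•(x0-xs) + t1•(x1-x0)⟫ + ⟪wq, Rt⟫ := by
      rw [hGsplit, inner_add_left, ContinuousLinearMap.adjoint_inner_left, hAv]
    have e2 : ⟪gψ, η•(x0-xs) + t1•(x1-x0)⟫ = η*⟪gψ, x1-xs⟫ + (t1-η)*⟪gψ, x1-x0⟫ := by
      rw [hv2, inner_add_right, real_inner_smul_right, real_inner_smul_right]
    have e3 : η*⟪wq, Rt⟫ = ⟪Rt, η•(l0-ls) + t1•(l1-l0)⟫ := by
      rw [← real_inner_smul_left, hwqs, real_inner_comm]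
    rw [e1, e2]; linarith [e3]
  -- main exact identity
  have main : (2*γ*δ*η^2*t1^2*((f x1 + ⟪ls, A x1 - b⟫ + β/2*‖A x1 - b‖^2)
        - (f xs + ⟪ls, A xs - b⟫ + β/2*‖A xs - b‖^2))
      + δ*η^2*‖η•(x0-xs) + t1•(x1-x0)‖^2 + γ*η^2*‖η•(l0-ls) + t1•(l1-l0)‖^2
      + δ*η^3*(1-η)*‖x0-xs‖^2 + γ*η^3*(1-η)*‖l0-ls‖^2)
      - (2*γ*δ*η^2*t0^2*((f x0 + ⟪ls, A x0 - b⟫ + β/2*‖A x0 - b‖^2)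
        - (f xs + ⟪ls, A xs - b⟫ + β/2*‖A xs - b‖^2))
      + δ*η^2*‖η•(xm-xs) + t0•(x0-xm)‖^2 + γ*η^2*‖η•(lm-ls) + t0•(l0-lm)‖^2
      + δ*η^3*(1-η)*‖xm-xs‖^2 + γ*η^3*(1-η)*‖lm-ls‖^2)
      = -(2*γ*δ*η^3*t1)*⟪gψ, x1-xs⟫ - (2*γ*δ*η^2*t1*(t1-η))*⟪gψ, x1-x0⟫
        + 2*γ*δ*η^2*t1^2*((f x1 + ⟪ls, A x1 - b⟫ + β/2*‖A x1 - b‖^2)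
            - (f xs + ⟪ls, A xs - b⟫ + β/2*‖A xs - b‖^2))
        - 2*γ*δ*η^2*t0^2*((f x0 + ⟪ls, A x0 - b⟫ + β/2*‖A x0 - b‖^2)
            - (f xs + ⟪ls, A xs - b⟫ + β/2*‖A xs - b‖^2))
        - (δ*η^2*(1-η)*(2*t0-1))*‖x0-xm‖^2 - (γ*η^2*(1-η)*(2*t0-1))*‖l0-lm‖^2
        - (γ^2*δ*η^2*t1^2)*‖G‖^2 - (γ*δ^2*t1^2)*‖Rt‖^2 := by
    linear_combination (δ*η^2)*E2 - (δ*η^2)*E1 + (δ*η^3*(1-η))*EX + (2*γ*δ*η^2*t1)*EG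
      + γ*F2s - (γ*η^2)*F1 + (γ*η^3*(1-η))*EL - (2*γ*δ*t1)*ERws - (2*γ*δ*η*t1)*key3v
  constructor
  · -- energy decrease
    have hcvx1' := psi_grad_ineq hf A b ls hβ hgx1 xs
    have hcvx2' := psi_grad_ineq hf A b ls hβ hgx1 x0
    have hflip1 : ⟪gψ, xs - x1⟫ = -⟪gψ, x1-xs⟫ := by
      rw [show xs - x1 = -(x1-xs) from by abel, inner_neg_right]
    have hflip2 : ⟪gψ, x0 - x1⟫ = -⟪gψ, x1-x0⟫ := by
      rw [show x0 - x1 = -(x1-x0) from by abel, inner_neg_right]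
    rw [← hgψ] at hcvx1' hcvx2'
    rw [hflip1] at hcvx1'
    rw [hflip2] at hcvx2'
    -- now hcvx1' : -⟪gψ,x1-xs⟫ ≤ ψ xs - ψ x1, etc.
    have hηt1 : η ≤ t1 := le_trans hηu ht1
    have hc1 : (0:ℝ) ≤ 2*γ*δ*η^3*t1 := by positivity
    have hc2 : (0:ℝ) ≤ 2*γ*δ*η^2*t1*(t1-η) := by
      have : (0:ℝ) ≤ t1 - η := by linarith
      positivity
    have hκ : t1*(t1-η) - t0^2 ≤ 0 := by
      have h : t1*(t1-η) = t1^2 - η*t1 := by ring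
      linarith
    have hs3 : 2*γ*δ*η^2*((t1*(t1-η) - t0^2)
        * ((f x0 + ⟪ls, A x0 - b⟫ + β/2*‖A x0 - b‖^2)
          - (f xs + ⟪ls, A xs - b⟫ + β/2*‖A xs - b‖^2))) ≤ 0 := by
      have h2 : (0:ℝ) ≤ 2*γ*δ*η^2 := by positivity
      exact mul_nonpos_of_nonneg_of_nonpos h2 (mul_nonpos_of_nonpos_of_nonneg hκ hφ0)
    have hs1g : 2*γ*δ*η^3*t1*((f x1 + ⟪ls, A x1 - b⟫ + β/2*‖A x1 - b‖^2)
          - (f xs + ⟪ls, A xs - b⟫ + β/2*‖A xs - b‖^2))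
        ≤ 2*γ*δ*η^3*t1*⟪gψ, x1-xs⟫ := by
      apply mul_le_mul_of_nonneg_left _ hc1
      linarith
    have hs2g : 2*γ*δ*η^2*t1*(t1-η)*(((f x1 + ⟪ls, A x1 - b⟫ + β/2*‖A x1 - b‖^2)
          - (f xs + ⟪ls, A xs - b⟫ + β/2*‖A xs - b‖^2))
          - ((f x0 + ⟪ls, A x0 - b⟫ + β/2*‖A x0 - b‖^2)
          - (f xs + ⟪ls, A xs - b⟫ + β/2*‖A xs - b‖^2)))
        ≤ 2*γ*δ*η^2*t1*(t1-η)*⟪gψ, x1-x0⟫ := by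
      apply mul_le_mul_of_nonneg_left _ hc2
      linarith
    have hna : (0:ℝ) ≤ δ*η^2*(1-η)*(2*t0-1)*‖x0-xm‖^2 := by
      have h1 : (0:ℝ) ≤ 1-η := by linarith
      have h2 : (0:ℝ) ≤ 2*t0-1 := by linarith
      positivity
    have hnb : (0:ℝ) ≤ γ*η^2*(1-η)*(2*t0-1)*‖l0-lm‖^2 := by
      have h1 : (0:ℝ) ≤ 1-η := by linarith
      have h2 : (0:ℝ) ≤ 2*t0-1 := by linarith
      positivity
    have hnG : (0:ℝ) ≤ (γ^2*δ*η^2*t1^2)*‖G‖^2 := by positivity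
    have hnR : (0:ℝ) ≤ (γ*δ^2*t1^2)*‖Rt‖^2 := by positivity
    linarith [main, hs1g, hs2g, hs3, hna, hnb, hnG, hnR]
  · -- Z recursion
    have hAd2 : A x1 - A x0 = (A x1 - b) - (A x0 - b) := by abel
    rw [hs2', hRtdef, hAd2]
    match_scalars <;> (try field_simp) <;> (try ring) <;> tauto
end step

end auxiliary_lemmas_for_stmt6

/-- Theorem 1(iv): feasibility violation and objective residual rates. -/
theorem stmt_6
    {n m : ℕ}
    (f : EuclideanSpace ℝ (Fin n) → ℝ)
    (hfconv : ConvexOn ℝ Set.univ f)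
    (hfC1 : ContDiff ℝ 1 f)
    (A : EuclideanSpace ℝ (Fin n) →L[ℝ] EuclideanSpace ℝ (Fin m))
    (b : EuclideanSpace ℝ (Fin m))
    (ρ γ δ β η : ℝ)
    (hρ0 : 0 < ρ) (hρ1 : ρ ≤ 1)
    (hγ : 0 < γ) (hδ : 0 < δ) (hβ : 0 ≤ β)
    (hηl : ρ ≤ η) (hηu : η ≤ 1)
    (t : ℕ → ℝ)
    (ht1 : t 1 = 1)
    (htmono : ∀ k ≥ 1, t k ≤ t (k+1))
    (htgt1 : ∀ k > 2, 1 < t k)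
    (htinf : Filter.Tendsto t Filter.atTop Filter.atTop)
    (htgrow : ∀ k ≥ 1, t (k+1)^2 - t k^2 ≤ ρ * t (k+1))
    (x : ℕ → EuclideanSpace ℝ (Fin n))
    (lam : ℕ → EuclideanSpace ℝ (Fin m))
    (hx01 : x 0 = x 1) (hl01 : lam 0 = lam 1)
    (hscheme1 : ∀ k ≥ 1,
      x (k+1) - (x k + ((t k - 1) / t (k+1)) • (x k - x (k-1)))
        = (-γ) • (gradient f (x (k+1))
            + (ContinuousLinearMap.adjoint A)
                (lam (k+1) + ((t (k+1) - η)/η) • (lam (k+1) - lam k))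
            + β • (ContinuousLinearMap.adjoint A) (A (x (k+1)) - b)))
    (hscheme2 : ∀ k ≥ 1,
      lam (k+1) - (lam k + ((t k - 1) / t (k+1)) • (lam k - lam (k-1)))
        = δ • ((A (x (k+1)) - b) + ((t (k+1) - η)/η) • (A (x (k+1) - x k))))
    (xs : EuclideanSpace ℝ (Fin n)) (ls : EuclideanSpace ℝ (Fin m))
    (hkkt1 : A xs = b)
    (hkkt2 : gradient f xs + (ContinuousLinearMap.adjoint A) ls = 0)
    (E1 : ℝ)
    (hE1 : E1 = (f (x 1) + ⟪ls, A (x 1) - b⟫ + (β/2) * ‖A (x 1) - b‖^2)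
        - (f xs + ⟪ls, A xs - b⟫ + (β/2) * ‖A xs - b‖^2)
        + (η/(2*γ)) * ‖x 1 - xs‖^2 + (η/(2*δ)) * ‖lam 1 - ls‖^2) :
    ∃ C > 0, ∀ k ≥ 1,
      ‖A (x k) - b‖ ≤ C / t k^2 ∧
      |f (x k) - f xs| ≤ (E1 + ‖ls‖ * C + β * C^2 / 2) / t k^2 := by
  have hη0 : 0 < η := lt_of_lt_of_le hρ0 hηl
  have hηn : η ≠ 0 := ne_of_gt hη0
  have hdiff : Differentiable ℝ f := hfC1.differentiable one_ne_zero
  have hgrad : ∀ p, HasGradientAt f (gradient f p) p := fun p => (hdiff p).hasGradientAt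
  -- t k ≥ 1 for k ≥ 1
  have htone : ∀ k, 1 ≤ k → (1:ℝ) ≤ t k := by
    intro k hk
    induction k, hk using Nat.le_induction with
    | base => rw [ht1]
    | succ k hk ih => exact le_trans ih (htmono k hk)
  -- zero residual at xs
  have hrs : A xs - b = 0 := by rw [hkkt1, sub_self]
  -- D k ≥ 0
  have hDnn : ∀ k, 0 ≤ (f (x k) + ⟪ls, A (x k) - b⟫ + β/2*‖A (x k) - b‖^2)
      - (f xs + ⟪ls, A xs - b⟫ + β/2*‖A xs - b‖^2) := by
    intro k
    have h := psi_grad_ineq hfconv A b ls hβ (hgrad xs) (x k)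
    rw [hrs] at h
    simp only [map_zero, smul_zero, add_zero] at h
    rw [hkkt2, inner_zero_left] at h
    have h0 : ⟪ls, A xs - b⟫ = (0:ℝ) := by rw [hrs, inner_zero_right]
    have h1 : ‖A xs - b‖^2 = (0:ℝ) := by rw [hrs, norm_zero]; ring
    rw [h0, h1]
    simp only [inner_zero_right, norm_zero] at h
    norm_num at h ⊢
    linarith
  -- gap inequality : f xs - f (x k) ≤ ⟪ls, A (x k) - b⟫
  have hgap : ∀ k, -⟪ls, A (x k) - b⟫ ≤ f (x k) - f xs := by
    intro k
    have h := grad_convex_ineq hfconv (hgrad xs) (x k)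
    have hg : gradient f xs = -(ContinuousLinearMap.adjoint A) ls := by
      have := hkkt2; linear_combination (norm := module) this
    rw [hg] at h
    have : ⟪-(ContinuousLinearMap.adjoint A) ls, x k - xs⟫ = -⟪ls, A (x k) - b⟫ := by
      rw [inner_neg_left, ContinuousLinearMap.adjoint_inner_left, map_sub, hkkt1]
    rw [this] at h
    exact h
  -- the Lyapunov energy
  set EE : ℕ → ℝ := fun k => 2*γ*δ*η^2*(t k)^2*((f (x k) + ⟪ls, A (x k) - b⟫ + β/2*‖A (x k) - b‖^2)
        - (f xs + ⟪ls, A xs - b⟫ + β/2*‖A xs - b‖^2))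
      + δ*η^2*‖η•(x (k-1)-xs) + t k•(x k - x (k-1))‖^2
      + γ*η^2*‖η•(lam (k-1)-ls) + t k•(lam k - lam (k-1))‖^2
      + δ*η^3*(1-η)*‖x (k-1)-xs‖^2 + γ*η^3*(1-η)*‖lam (k-1)-ls‖^2 with hEE
  have hgrow' : ∀ k, 1 ≤ k → t (k+1)^2 - t k^2 ≤ η * t (k+1) := by
    intro k hk
    have h := htgrow k hk
    have h0 : (0:ℝ) ≤ t (k+1) := le_trans zero_le_one (htone (k+1) (by omega))
    nlinarith [mul_le_mul_of_nonneg_right hηl h0]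
  have hsteps : ∀ k, 1 ≤ k →
      (EE (k+1) ≤ EE k ∧
        ((η•(lam k-ls) + t (k+1)•(lam (k+1) - lam k)) + (1-η)•(lam k-ls)
            - ((δ*(t (k+1))^2)/η)•(A (x (k+1)) - b)
          = ((η•(lam (k-1)-ls) + t k•(lam k - lam (k-1))) + (1-η)•(lam (k-1)-ls)
            - ((δ*(t k)^2)/η)•(A (x k) - b))
            + ((δ*((t k)^2 + η*t (k+1) - t (k+1)^2))/η)•(A (x k) - b))) := by
    intro k hk
    have H := step_lemma A b ls xs hkkt1 hfconv hη0 hηu hγ hδ hβ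
      (htone k hk) (htmono k hk) (hgrow' k hk)
      (x (k-1)) (x k) (x (k+1)) (lam (k-1)) (lam k) (lam (k+1))
      (hgrad (x (k+1))) (hscheme1 k hk) (hscheme2 k hk) (hDnn k)
    constructor
    · simp only [hEE, Nat.add_sub_cancel]
      exact H.1
    · exact H.2
  have hEEle : ∀ k, 1 ≤ k → EE k ≤ EE 1 := by
    intro k hk
    induction k, hk using Nat.le_induction with
    | base => exact le_refl _
    | succ k hk ih => exact le_trans (hsteps k hk).1 ih
  -- value of EE 1
  have hx10 : x 1 - x 0 = 0 := by rw [hx01, sub_self]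
  have hl10 : lam 1 - lam 0 = 0 := by rw [hl01, sub_self]
  have hEE1 : EE 1 = 2*γ*δ*η^2*E1 := by
    have h0 : ⟪ls, A xs - b⟫ = (0:ℝ) := by rw [hrs, inner_zero_right]
    have h1 : ‖A xs - b‖^2 = (0:ℝ) := by rw [hrs, norm_zero]; ring
    simp only [hEE, Nat.sub_self]
    rw [hx01, hl01, ht1]
    simp only [sub_self, smul_zero, add_zero, norm_smul_sq]
    rw [hE1, h0, h1]
    have hJ : ∀ c : ℝ, c = c := fun c => rfl
    field_simp
    ring
  have hEpos : (0:ℝ) < 2*γ*δ*η^2 := by positivity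
  have h0s : ⟪ls, A xs - b⟫ = (0:ℝ) := by rw [hrs, inner_zero_right]
  have h1s : ‖A xs - b‖^2 = (0:ℝ) := by rw [hrs, norm_zero]; ring
  have hE1nn : 0 ≤ E1 := by
    have h := hDnn 1
    have p1 : 0 ≤ η/(2*γ) * ‖x 1 - xs‖^2 := by positivity
    have p2 : 0 ≤ η/(2*δ) * ‖lam 1 - ls‖^2 := by positivity
    rw [hE1]; linarith
  -- generic extraction of EE-term bounds
  have hTerms : ∀ k, 1 ≤ k →
      2*γ*δ*η^2*(t k)^2*((f (x k) + ⟪ls, A (x k) - b⟫ + β/2*‖A (x k) - b‖^2)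
        - (f xs + ⟪ls, A xs - b⟫ + β/2*‖A xs - b‖^2)) ≤ 2*γ*δ*η^2*E1
      ∧ γ*η^2*‖η•(lam (k-1)-ls) + t k•(lam k - lam (k-1))‖^2 ≤ 2*γ*δ*η^2*E1 := by
    intro k hk
    have h := hEEle k hk
    rw [hEE1] at h
    simp only [hEE] at h
    have p1 : 0 ≤ 2*γ*δ*η^2*(t k)^2*((f (x k) + ⟪ls, A (x k) - b⟫ + β/2*‖A (x k) - b‖^2)
        - (f xs + ⟪ls, A xs - b⟫ + β/2*‖A xs - b‖^2)) :=
      mul_nonneg (by positivity) (hDnn k)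
    have p2 : 0 ≤ δ*η^2*‖η•(x (k-1)-xs) + t k•(x k - x (k-1))‖^2 := by positivity
    have p3 : 0 ≤ γ*η^2*‖η•(lam (k-1)-ls) + t k•(lam k - lam (k-1))‖^2 := by positivity
    have h1η : (0:ℝ) ≤ 1-η := by linarith
    have p4 : 0 ≤ δ*η^3*(1-η)*‖x (k-1)-xs‖^2 := by positivity
    have p5 : 0 ≤ γ*η^3*(1-η)*‖lam (k-1)-ls‖^2 := by positivity
    constructor <;> linarith
  have hDb : ∀ k, 1 ≤ k → (t k)^2*((f (x k) + ⟪ls, A (x k) - b⟫ + β/2*‖A (x k) - b‖^2)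
      - (f xs + ⟪ls, A xs - b⟫ + β/2*‖A xs - b‖^2)) ≤ E1 := by
    intro k hk
    have h := (hTerms k hk).1
    have h2 : 2*γ*δ*η^2*((t k)^2*((f (x k) + ⟪ls, A (x k) - b⟫ + β/2*‖A (x k) - b‖^2)
      - (f xs + ⟪ls, A xs - b⟫ + β/2*‖A xs - b‖^2))) ≤ 2*γ*δ*η^2*E1 := by linarith [h]
    exact le_of_mul_le_mul_left (by linarith [h2]) hEpos
  set W := Real.sqrt (2*δ*E1) with hWdef
  have hWnn : 0 ≤ W := Real.sqrt_nonneg _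
  have hWk : ∀ k, 1 ≤ k → ‖η•(lam (k-1)-ls) + t k•(lam k - lam (k-1))‖ ≤ W := by
    intro k hk
    have h := (hTerms k hk).2
    have hγη : (0:ℝ) < γ*η^2 := by positivity
    have h2 : γ*η^2*‖η•(lam (k-1)-ls) + t k•(lam k - lam (k-1))‖^2 ≤ γ*η^2*(2*δ*E1) := by
      linarith [h]
    have h3 : ‖η•(lam (k-1)-ls) + t k•(lam k - lam (k-1))‖^2 ≤ 2*δ*E1 :=
      le_of_mul_le_mul_left (by linarith [h2]) hγη
    calc ‖η•(lam (k-1)-ls) + t k•(lam k - lam (k-1))‖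
        = Real.sqrt (‖η•(lam (k-1)-ls) + t k•(lam k - lam (k-1))‖^2) :=
          (Real.sqrt_sq (norm_nonneg _)).symm
      _ ≤ W := Real.sqrt_le_sqrt h3
  have hΛ1 : ‖lam 1 - ls‖ ≤ W/η := by
    have h := hWk 1 le_rfl
    have he : η•(lam (1-1)-ls) + t 1•(lam 1 - lam (1-1)) = η•(lam 1 - ls) := by
      simp only [Nat.sub_self]
      rw [hl01]
      simp [sub_self]
    rw [he, norm_smul, Real.norm_eq_abs, abs_of_pos hη0] at h
    rw [le_div_iff₀ hη0, mul_comm]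
    exact h
  have hΛ : ∀ k, ‖lam k - ls‖ ≤ W/η := by
    have main : ∀ k, 1 ≤ k → ‖lam k - ls‖ ≤ W/η := by
      intro k hk
      induction k, hk using Nat.le_induction with
      | base => exact hΛ1
      | succ k hk ih =>
        have hv : t (k+1)•(lam (k+1) - ls) = (t (k+1) - η)•(lam k - ls)
            + (η•(lam ((k+1)-1)-ls) + t (k+1)•(lam (k+1) - lam ((k+1)-1))) := by
          simp only [Nat.add_sub_cancel]
          module
        have ht1k : (1:ℝ) ≤ t (k+1) := htone (k+1) (by omega)
        have ht1p : (0:ℝ) < t (k+1) := by linarith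
        have hn : ‖t (k+1)•(lam (k+1) - ls)‖ ≤ (t (k+1) - η)*‖lam k - ls‖ + W := by
          rw [hv]
          refine le_trans (norm_add_le _ _) ?_
          rw [norm_smul, Real.norm_eq_abs, abs_of_nonneg (by linarith : (0:ℝ) ≤ t (k+1) - η)]
          have := hWk (k+1) (by omega)
          linarith
        rw [norm_smul, Real.norm_eq_abs, abs_of_pos ht1p] at hn
        have hstep2 : (t (k+1) - η)*‖lam k - ls‖ + W ≤ t (k+1) * (W/η) := by
          have h1 : (t (k+1) - η)*‖lam k - ls‖ ≤ (t (k+1) - η)*(W/η) :=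
            mul_le_mul_of_nonneg_left ih (by linarith)
          have h2 : (t (k+1) - η)*(W/η) + W = t (k+1)*(W/η) := by
            field_simp
            ring
          linarith
        have := le_trans hn hstep2
        exact le_of_mul_le_mul_left this ht1p
    intro k
    cases k with
    | zero => rw [hl01]; exact main 1 le_rfl
    | succ k => exact main (k+1) (by omega)
  set YB := W + (1-η)*(W/η) with hYBdef
  have hYBnn : 0 ≤ YB := by
    have : 0 ≤ (1-η)*(W/η) := mul_nonneg (by linarith) (by positivity)
    rw [hYBdef]; linarith
  have hYb : ∀ k, 1 ≤ k →
      ‖(η•(lam (k-1)-ls) + t k•(lam k - lam (k-1))) + (1-η)•(lam (k-1)-ls)‖ ≤ YB := by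
    intro k hk
    refine le_trans (norm_add_le _ _) ?_
    have h2 : ‖(1-η)•(lam (k-1)-ls)‖ = (1-η)*‖lam (k-1)-ls‖ := by
      rw [norm_smul, Real.norm_eq_abs, abs_of_nonneg (by linarith : (0:ℝ) ≤ 1-η)]
    have h3 : (1-η)*‖lam (k-1)-ls‖ ≤ (1-η)*(W/η) :=
      mul_le_mul_of_nonneg_left (hΛ (k-1)) (by linarith)
    have := hWk k hk
    rw [hYBdef, h2]
    linarith
  set Zf : ℕ → EuclideanSpace ℝ (Fin m) := fun k =>
      ((η•(lam (k-1)-ls) + t k•(lam k - lam (k-1))) + (1-η)•(lam (k-1)-ls))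
        - ((δ*(t k)^2)/η)•(A (x k) - b) with hZf
  set M := max ‖Zf 1‖ YB with hMdef
  have hMnn : 0 ≤ M := le_trans (norm_nonneg _) (le_max_left _ _)
  have hZb : ∀ k, 1 ≤ k → ‖Zf k‖ ≤ M := by
    intro k hk
    induction k, hk using Nat.le_induction with
    | base => exact le_max_left _ _
    | succ k hk ih =>
      have hZrec := (hsteps k hk).2
      set ck := (t k)^2 + η*t (k+1) - t (k+1)^2 with hck
      have htk1 : (1:ℝ) ≤ t k := htone k hk
      have htk2 : (0:ℝ) < (t k)^2 := by positivity
      have ht1k : (1:ℝ) ≤ t (k+1) := htone (k+1) (by omega)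
      have hck0 : 0 ≤ ck := by have := hgrow' k hk; rw [hck]; linarith
      have hck1 : ck ≤ (t k)^2 := by
        have h1 : η ≤ t (k+1) := le_trans hηu ht1k
        have h2 : η*t (k+1) ≤ t (k+1)*t (k+1) :=
          mul_le_mul_of_nonneg_right h1 (by linarith)
        rw [hck]; nlinarith
      set θ := ck/(t k)^2 with hθ
      have hθ0 : 0 ≤ θ := div_nonneg hck0 (le_of_lt htk2)
      have hθ1 : θ ≤ 1 := by rw [hθ, div_le_one htk2]; exact hck1
      have hYZ : (((η•(lam (k-1)-ls) + t k•(lam k - lam (k-1))) + (1-η)•(lam (k-1)-ls)))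
          - Zf k = ((δ*(t k)^2)/η)•(A (x k) - b) := by
        simp only [hZf]
        abel
      have hcoef : ((δ*ck)/η)•(A (x k) - b)
          = θ•((((η•(lam (k-1)-ls) + t k•(lam k - lam (k-1))) + (1-η)•(lam (k-1)-ls)))
            - Zf k) := by
        rw [hYZ, smul_smul]
        congr 1
        rw [hθ]
        field_simp
      have hZs : Zf (k+1) = Zf k + ((δ*ck)/η)•(A (x k) - b) := by
        simp only [hZf, Nat.add_sub_cancel]
        exact hZrec
      rw [hZs, hcoef]
      have hco : Zf k + θ•((((η•(lam (k-1)-ls) + t k•(lam k - lam (k-1)))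
          + (1-η)•(lam (k-1)-ls))) - Zf k)
          = (1-θ)•Zf k + θ•(((η•(lam (k-1)-ls) + t k•(lam k - lam (k-1)))
          + (1-η)•(lam (k-1)-ls))) := by module
      rw [hco]
      refine le_trans (norm_add_le _ _) ?_
      rw [norm_smul, norm_smul, Real.norm_eq_abs, Real.norm_eq_abs,
        abs_of_nonneg (by linarith : (0:ℝ) ≤ 1-θ), abs_of_nonneg hθ0]
      have hy := hYb k hk
      have hyM : ‖(η•(lam (k-1)-ls) + t k•(lam k - lam (k-1))) + (1-η)•(lam (k-1)-ls)‖ ≤ M :=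
        le_trans hy (le_max_right _ _)
      have p1 : (1-θ)*‖Zf k‖ ≤ (1-θ)*M := mul_le_mul_of_nonneg_left ih (by linarith)
      have p2 : θ*‖(η•(lam (k-1)-ls) + t k•(lam k - lam (k-1))) + (1-η)•(lam (k-1)-ls)‖ ≤ θ*M :=
        mul_le_mul_of_nonneg_left hyM hθ0
      nlinarith [p1, p2]
  -- feasibility bound
  have hrb : ∀ k, 1 ≤ k → (t k)^2*‖A (x k) - b‖ ≤ (η/δ)*(YB + M) := by
    intro k hk
    have htk1 : (1:ℝ) ≤ t k := htone k hk
    have htk2 : (0:ℝ) < (t k)^2 := by positivity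
    have hYZ : (((η•(lam (k-1)-ls) + t k•(lam k - lam (k-1))) + (1-η)•(lam (k-1)-ls)))
        - Zf k = ((δ*(t k)^2)/η)•(A (x k) - b) := by
      simp only [hZf]
      abel
    have hn1 : ‖((δ*(t k)^2)/η)•(A (x k) - b)‖ ≤ YB + M := by
      rw [← hYZ]
      refine le_trans (norm_sub_le _ _) ?_
      have := hYb k hk
      have := hZb k hk
      linarith
    rw [norm_smul, Real.norm_eq_abs, abs_of_nonneg (by positivity : (0:ℝ) ≤ (δ*(t k)^2)/η)]
      at hn1
    have hd : (0:ℝ) < δ/η := by positivity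
    have h2 : (δ/η)*((t k)^2*‖A (x k) - b‖) ≤ (δ/η)*((η/δ)*(YB+M)) := by
      have he : (δ/η)*((η/δ)*(YB+M)) = YB + M := by field_simp
      rw [he]
      calc (δ/η)*((t k)^2*‖A (x k) - b‖) = ((δ*(t k)^2)/η)*‖A (x k) - b‖ := by ring
        _ ≤ YB + M := hn1
    exact le_of_mul_le_mul_left h2 hd
  set C0 := (η/δ)*(YB + M) with hC0
  have hC0nn : 0 ≤ C0 := by
    have : (0:ℝ) ≤ η/δ := by positivity
    exact mul_nonneg this (by linarith)
  refine ⟨C0 + 1, by linarith, fun k hk => ?_⟩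
  have htk1 : (1:ℝ) ≤ t k := htone k hk
  have htk2 : (0:ℝ) < (t k)^2 := by positivity
  have hrk := hrb k hk
  constructor
  · rw [le_div_iff₀ htk2]
    calc ‖A (x k) - b‖ * t k^2 = (t k)^2*‖A (x k) - b‖ := by ring
      _ ≤ C0 := hrk
      _ ≤ C0 + 1 := by linarith
  · have hDk := hDb k hk
    have hinner : |⟪ls, A (x k) - b⟫| ≤ ‖ls‖*‖A (x k) - b‖ := abs_real_inner_le_norm _ _
    have hip1 : -(‖ls‖*‖A (x k) - b‖) ≤ ⟪ls, A (x k) - b⟫ := by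
      have := neg_abs_le ⟪ls, A (x k) - b⟫
      linarith
    have hip2 : ⟪ls, A (x k) - b⟫ ≤ ‖ls‖*‖A (x k) - b‖ := le_trans (le_abs_self _) hinner
    have hlsr : (t k)^2*(‖ls‖*‖A (x k) - b‖) ≤ ‖ls‖*C0 := by
      calc (t k)^2*(‖ls‖*‖A (x k) - b‖) = ‖ls‖*((t k)^2*‖A (x k) - b‖) := by ring
        _ ≤ ‖ls‖*C0 := mul_le_mul_of_nonneg_left hrk (norm_nonneg _)
    have hgk := hgap k
    have hnum : (0:ℝ) ≤ E1 + ‖ls‖*(C0+1) + β*(C0+1)^2/2 := by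
      have : (0:ℝ) ≤ ‖ls‖*(C0+1) := mul_nonneg (norm_nonneg _) (by linarith)
      have : (0:ℝ) ≤ β*(C0+1)^2/2 := by positivity
      linarith [hE1nn]
    have hub : (f (x k) - f xs)*(t k)^2 ≤ E1 + ‖ls‖*(C0+1) + β*(C0+1)^2/2 := by
      have hD2 : (t k)^2*(f (x k) - f xs)
          ≤ E1 - (t k)^2*⟪ls, A (x k) - b⟫ - (t k)^2*(β/2*‖A (x k) - b‖^2) := by
        rw [h0s, h1s] at hDk
        nlinarith [hDk]
      have hb1 : (t k)^2*(-⟪ls, A (x k) - b⟫) ≤ (t k)^2*(‖ls‖*‖A (x k) - b‖) :=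
        mul_le_mul_of_nonneg_left (by linarith) (le_of_lt htk2)
      have hb2 : 0 ≤ (t k)^2*(β/2*‖A (x k) - b‖^2) := by positivity
      have : (0:ℝ) ≤ ‖ls‖*1 := by positivity
      have : (0:ℝ) ≤ β*(C0+1)^2/2 := by positivity
      nlinarith [hlsr]
    have hlb : -(E1 + ‖ls‖*(C0+1) + β*(C0+1)^2/2) ≤ (f (x k) - f xs)*(t k)^2 := by
      have hb1 : (t k)^2*(-⟪ls, A (x k) - b⟫) ≤ (t k)^2*(f (x k) - f xs) :=
        mul_le_mul_of_nonneg_left hgk (le_of_lt htk2)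
      have hb2 : (t k)^2*⟪ls, A (x k) - b⟫ ≤ (t k)^2*(‖ls‖*‖A (x k) - b‖) :=
        mul_le_mul_of_nonneg_left hip2 (le_of_lt htk2)
      have : (0:ℝ) ≤ ‖ls‖*1 := by positivity
      have : (0:ℝ) ≤ β*(C0+1)^2/2 := by positivity
      nlinarith [hlsr, hE1nn]
    rw [abs_le]
    constructor
    · have h := (div_le_iff₀ htk2).mpr hlb
      rw [neg_div] at h
      exact h
    · exact (le_div_iff₀ htk2).mpr hub
end

section
/- For all k ≥ 1, one has ‖z_k − z*‖_M ≤ W/η and a_k ‖z_k − z_{k−1}‖_M ≤ 2W. -/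
open Matrix

/-- Lemma A.3: boundedness lemma for inertial sequences. -/
theorem stmt_15
    {N : ℕ} (M : Matrix (Fin N) (Fin N) ℝ) (hM : M.PosDef)
    (η : ℝ) (hη : 0 < η)
    (a : ℕ → ℝ) (ha : ∀ k ≥ 1, 0 ≤ a k)
    (z : ℕ → (Fin N → ℝ)) (hz : z 1 = z 0)
    (zs : Fin N → ℝ)
    (w : ℕ → (Fin N → ℝ))
    (hw : ∀ k ≥ 1, w k = η • (z k - zs) + a k • (z k - z (k-1)))
    (W : ℝ)
    (hW : ∀ k ≥ 1, Real.sqrt (M.mulVec (w k) ⬝ᵥ w k) ≤ W) :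
    ∀ k ≥ 1,
      Real.sqrt (M.mulVec (z k - zs) ⬝ᵥ (z k - zs)) ≤ W / η ∧
      a k * Real.sqrt (M.mulVec (z k - z (k-1)) ⬝ᵥ (z k - z (k-1))) ≤ 2 * W := by
  open scoped MatrixOrder in
  set A := CFC.sqrt M with hA
  have hAA : A * A = M := by
    open scoped MatrixOrder in exact CFC.sqrt_mul_sqrt_self M hM.posSemidef.nonneg
  have hAsym : Aᵀ = A := by
    open scoped MatrixOrder in
    have := (CFC.sqrt_nonneg M).posSemidef.isHermitian
    simpa [Matrix.IsHermitian, Matrix.conjTranspose_eq_transpose_of_trivial] using this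
  -- quadratic form via square root
  have hquad : ∀ v : Fin N → ℝ, M.mulVec v ⬝ᵥ v = A.mulVec v ⬝ᵥ A.mulVec v := by
    intro v
    rw [← hAA, ← Matrix.mulVec_mulVec, dotProduct_comm,
      Matrix.dotProduct_mulVec, ← Matrix.mulVec_transpose, hAsym]
  -- norm via Euclidean space
  have hg : ∀ u : Fin N → ℝ, Real.sqrt (u ⬝ᵥ u)
      = ‖(WithLp.equiv 2 (Fin N → ℝ)).symm u‖ := by
    intro u
    rw [EuclideanSpace.norm_eq]
    congr 1
    simp [dotProduct, Real.norm_eq_abs, sq_abs, sq]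
  set f : (Fin N → ℝ) → ℝ := fun v => Real.sqrt (M.mulVec v ⬝ᵥ v) with hf
  have hfnorm : ∀ v, f v = ‖(WithLp.equiv 2 (Fin N → ℝ)).symm (A.mulVec v)‖ := by
    intro v; rw [hf]; simp only; rw [hquad, hg]
  have hf0 : ∀ v, 0 ≤ f v := fun v => Real.sqrt_nonneg _
  have hfadd : ∀ u v, f (u + v) ≤ f u + f v := by
    intro u v
    rw [hfnorm, hfnorm, hfnorm, Matrix.mulVec_add]
    exact norm_add_le ((WithLp.equiv 2 (Fin N → ℝ)).symm (A *ᵥ u)) ((WithLp.equiv 2 (Fin N → ℝ)).symm (A *ᵥ v))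
  have hfsmul : ∀ (c : ℝ) v, 0 ≤ c → f (c • v) = c * f v := by
    intro c v hc
    rw [hfnorm, hfnorm, Matrix.mulVec_smul]
    have : (WithLp.equiv 2 (Fin N → ℝ)).symm (c • A.mulVec v)
        = c • (WithLp.equiv 2 (Fin N → ℝ)).symm (A.mulVec v) := rfl
    rw [this, norm_smul, Real.norm_eq_abs, abs_of_nonneg hc]
  have hWnn : 0 ≤ W := le_trans (hf0 (w 1)) (hW 1 le_rfl)
  -- main induction: f (z k - zs) ≤ W / η
  have main : ∀ k ≥ 1, f (z k - zs) ≤ W / η := by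
    intro k hk
    induction k, hk using Nat.le_induction with
    | base =>
        have h1 : w 1 = η • (z 1 - zs) := by
          rw [hw 1 le_rfl]; simp [hz]
        have := hW 1 le_rfl
        rw [show Real.sqrt (M.mulVec (w 1) ⬝ᵥ w 1) = f (w 1) from rfl, h1,
          hfsmul η _ hη.le] at this
        rw [le_div_iff₀ hη, mul_comm]
        exact this
    | succ k hk ih =>
        have hak : 0 ≤ a (k+1) := ha (k+1) (by omega)
        have hid : (η + a (k+1)) • (z (k+1) - zs)
            = w (k+1) + a (k+1) • (z k - zs) := by
          rw [hw (k+1) (by omega)]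
          simp only [Nat.add_sub_cancel]
          module
        have h1 : (η + a (k+1)) * f (z (k+1) - zs)
            ≤ W + a (k+1) * (W / η) := by
          rw [← hfsmul _ _ (by positivity), hid]
          calc f (w (k+1) + a (k+1) • (z k - zs))
              ≤ f (w (k+1)) + f (a (k+1) • (z k - zs)) := hfadd _ _
            _ ≤ W + a (k+1) * (W / η) := by
                rw [hfsmul _ _ hak]
                exact add_le_add (hW (k+1) (by omega)) (by nlinarith)
        have h2 : W + a (k+1) * (W / η) = (η + a (k+1)) * (W / η) := by
          field_simp
        rw [h2] at h1
        exact le_of_mul_le_mul_left h1 (by positivity)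
  intro k hk
  refine ⟨main k hk, ?_⟩
  have hak : 0 ≤ a k := ha k hk
  have hid : a k • (z k - z (k-1)) = w k + (-η) • (z k - zs) := by
    rw [hw k hk]; module
  have : f (a k • (z k - z (k-1))) ≤ 2 * W := by
    rw [hid]
    calc f (w k + (-η) • (z k - zs))
        ≤ f (w k) + f ((-η) • (z k - zs)) := hfadd _ _
      _ ≤ W + η * (W / η) := by
          refine add_le_add (hW k hk) ?_
          have : (-η) • (z k - zs) = η • (-(z k - zs)) := by module
          rw [this]
          have hneg : f (-(z k - zs)) = f (z k - zs) := by
            rw [hfnorm, hfnorm, Matrix.mulVec_neg]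
            have : (WithLp.equiv 2 (Fin N → ℝ)).symm (-(A.mulVec (z k - zs)))
                = -((WithLp.equiv 2 (Fin N → ℝ)).symm (A.mulVec (z k - zs))) := rfl
            rw [this, norm_neg]
          rw [hfsmul _ _ hη.le, hneg]
          exact mul_le_mul_of_nonneg_left (main k hk) hη.le
      _ = 2 * W := by field_simp; ring
  rw [hfsmul _ _ hak] at this
  exact this
end

section
/- If the sequence F_{k+1} := r_{k+1} + Σ_{j=1}^{k} a_j r_j has a finite limit in ℝ^N as k → +∞, then ‖r_k‖ → 0 as k → +∞. -/
open Filter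

lemma aux_avg (u e a : ℕ → ℝ) (hu : ∀ k, 0 ≤ u k)
    (ha0 : ∀ k ≥ 1, 0 < a k) (ha1 : ∀ k ≥ 1, a k < 1)
    (hdiv : Tendsto (fun K => ∑ k ∈ Finset.Icc 1 K, a k) atTop atTop)
    (he : Tendsto e atTop (nhds 0))
    (hrec : ∀ k, u (k+1) ≤ (1 - a (k+1)) * u k + a (k+1) * e k) :
    Tendsto u atTop (nhds 0) := by
  rw [Metric.tendsto_atTop]
  intro ε hε
  obtain ⟨K, hK⟩ := (Metric.tendsto_atTop.mp he) (ε/2) (by positivity)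
  set v : ℕ → ℝ := fun k => max (u k - ε/2) 0 with hv
  have hv0 : ∀ k, 0 ≤ v k := fun k => le_max_right _ _
  have ha0' : ∀ k, 0 ≤ 1 - a (k+1) := fun k => by
    have := ha1 (k+1) (Nat.le_add_left 1 k); linarith
  have hvstep : ∀ k ≥ K, v (k+1) ≤ (1 - a (k+1)) * v k := by
    intro k hk
    have hek : e k ≤ ε/2 := by
      have := hK k hk
      rw [Real.dist_eq, sub_zero] at this
      exact (abs_le.mp this.le).2
    have hak : 0 < a (k+1) := ha0 (k+1) (Nat.le_add_left 1 k)
    have h1 : u (k+1) - ε/2 ≤ (1 - a (k+1)) * (u k - ε/2) := by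
      have := hrec k
      nlinarith
    have h2 : (1 - a (k+1)) * (u k - ε/2) ≤ (1 - a (k+1)) * v k :=
      mul_le_mul_of_nonneg_left (le_max_left _ _) (ha0' k)
    have h3 : (0:ℝ) ≤ (1 - a (k+1)) * v k := mul_nonneg (ha0' k) (hv0 k)
    exact max_le (h1.trans h2) h3
  have hprod_nonneg : ∀ n, 0 ≤ ∏ j ∈ Finset.Icc (K+1) n, (1 - a j) := by
    intro n
    apply Finset.prod_nonneg
    intro j hj
    have hj1 : 1 ≤ j := le_trans (Nat.le_add_left 1 K) (Finset.mem_Icc.mp hj).1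
    have := ha1 j hj1; linarith
  have hvbound : ∀ n, K ≤ n → v n ≤ v K * ∏ j ∈ Finset.Icc (K+1) n, (1 - a j) := by
    intro n hn
    induction n, hn using Nat.le_induction with
    | base => simp
    | succ n hn ih =>
      have := hvstep n hn
      calc v (n+1) ≤ (1 - a (n+1)) * v n := this
        _ ≤ (1 - a (n+1)) * (v K * ∏ j ∈ Finset.Icc (K+1) n, (1 - a j)) :=
            mul_le_mul_of_nonneg_left ih (ha0' n)
        _ = v K * ∏ j ∈ Finset.Icc (K+1) (n+1), (1 - a j) := by
            rw [Finset.prod_Icc_succ_top (Nat.succ_le_succ hn)]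
            ring
  have hexp : ∀ n, ∏ j ∈ Finset.Icc (K+1) n, (1 - a j)
      ≤ Real.exp (-(∑ j ∈ Finset.Icc (K+1) n, a j)) := by
    intro n
    calc ∏ j ∈ Finset.Icc (K+1) n, (1 - a j)
        ≤ ∏ j ∈ Finset.Icc (K+1) n, Real.exp (-a j) := ?_
      _ = Real.exp (∑ j ∈ Finset.Icc (K+1) n, -a j) := (Real.exp_sum _ _).symm
      _ = Real.exp (-(∑ j ∈ Finset.Icc (K+1) n, a j)) := by rw [Finset.sum_neg_distrib]
    apply Finset.prod_le_prod
    · intro j hj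
      have hj1 : 1 ≤ j := le_trans (Nat.le_add_left 1 K) (Finset.mem_Icc.mp hj).1
      have := ha1 j hj1; linarith
    · intro j hj
      have := Real.add_one_le_exp (-a j)
      linarith
  have hsum : Tendsto (fun n => ∑ j ∈ Finset.Icc (K+1) n, a j) atTop atTop := by
    have heq : ∀ n, K ≤ n → ∑ j ∈ Finset.Icc (K+1) n, a j
        = (∑ j ∈ Finset.Icc 1 n, a j) - ∑ j ∈ Finset.Icc 1 K, a j := by
      intro n hn
      have h := Finset.sum_Ioc_consecutive a (Nat.zero_le K) hn
      rw [← Finset.Icc_add_one_left_eq_Ioc, ← Finset.Icc_add_one_left_eq_Ioc, ← Finset.Icc_add_one_left_eq_Ioc] at h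
      simp only [Nat.succ_eq_add_one, zero_add] at h
      linarith
    apply Tendsto.congr' _ (tendsto_atTop_add_const_right atTop
      (-(∑ j ∈ Finset.Icc 1 K, a j)) hdiv)
    filter_upwards [eventually_ge_atTop K] with n hn
    rw [heq n hn]; ring
  have htend : Tendsto (fun n => v K * Real.exp (-(∑ j ∈ Finset.Icc (K+1) n, a j)))
      atTop (nhds 0) := by
    have : Tendsto (fun n => Real.exp (-(∑ j ∈ Finset.Icc (K+1) n, a j))) atTop (nhds 0) :=
      Real.tendsto_exp_atBot.comp (tendsto_neg_atTop_atBot.comp hsum)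
    simpa using this.const_mul (v K)
  obtain ⟨M, hM⟩ := (Metric.tendsto_atTop.mp htend) (ε/2) (by positivity)
  refine ⟨max K M, fun n hn => ?_⟩
  have hnK : K ≤ n := le_trans (le_max_left _ _) hn
  have hnM : M ≤ n := le_trans (le_max_right _ _) hn
  have h1 : v n ≤ v K * ∏ j ∈ Finset.Icc (K+1) n, (1 - a j) := hvbound n hnK
  have h2 : v K * ∏ j ∈ Finset.Icc (K+1) n, (1 - a j)
      ≤ v K * Real.exp (-(∑ j ∈ Finset.Icc (K+1) n, a j)) :=
    mul_le_mul_of_nonneg_left (hexp n) (hv0 K)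
  have h3 : v K * Real.exp (-(∑ j ∈ Finset.Icc (K+1) n, a j)) < ε/2 := by
    have := hM n hnM
    rw [Real.dist_eq, sub_zero] at this
    exact (abs_lt.mp this).2
  have hun : u n - ε/2 ≤ v n := le_max_left _ _
  rw [Real.dist_eq, sub_zero, abs_of_nonneg (hu n)]
  linarith

/-- Lemma A.6: averaging lemma for residual sequences. -/
theorem stmt_16
    {N : ℕ}
    (r : ℕ → EuclideanSpace ℝ (Fin N))
    (a : ℕ → ℝ)
    (ha0 : ∀ k ≥ 1, 0 < a k) (ha1 : ∀ k ≥ 1, a k < 1)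
    (hdiv : Filter.Tendsto (fun K => ∑ k ∈ Finset.Icc 1 K, a k) Filter.atTop Filter.atTop)
    (Finf : EuclideanSpace ℝ (Fin N))
    (hF : Filter.Tendsto (fun k => r (k+1) + ∑ j ∈ Finset.Icc 1 k, a j • r j)
        Filter.atTop (nhds Finf)) :
    Filter.Tendsto (fun k => ‖r k‖) Filter.atTop (nhds 0) := by
  set S : ℕ → EuclideanSpace ℝ (Fin N) := fun k => ∑ j ∈ Finset.Icc 1 k, a j • r j with hS
  set g : ℕ → EuclideanSpace ℝ (Fin N) := fun k => (r (k+1) + S k) - Finf with hg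
  have hg0 : Tendsto g atTop (nhds 0) := by
    rw [hg]
    simpa using hF.sub_const Finf
  set T : ℕ → EuclideanSpace ℝ (Fin N) := fun k => Finf - S k with hT
  have hr : ∀ k, r (k+1) = g k + T k := by
    intro k; simp [hg, hT]
  have hSrec : ∀ k, S (k+1) = S k + a (k+1) • r (k+1) := by
    intro k
    simp only [hS]
    rw [Finset.sum_Icc_succ_top (Nat.le_add_left 1 k)]
  have hTrec : ∀ k, T (k+1) = (1 - a (k+1)) • T k - a (k+1) • g k := by
    intro k
    simp only [hT, hSrec k, hr k, smul_add, sub_smul, one_smul]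
    abel
  have hnorm : ∀ k, ‖T (k+1)‖ ≤ (1 - a (k+1)) * ‖T k‖ + a (k+1) * ‖g k‖ := by
    intro k
    have hak0 := ha0 (k+1) (Nat.le_add_left 1 k)
    have hak1 := ha1 (k+1) (Nat.le_add_left 1 k)
    calc ‖T (k+1)‖ = ‖(1 - a (k+1)) • T k - a (k+1) • g k‖ := by rw [hTrec k]
      _ ≤ ‖(1 - a (k+1)) • T k‖ + ‖a (k+1) • g k‖ := norm_sub_le _ _
      _ = (1 - a (k+1)) * ‖T k‖ + a (k+1) * ‖g k‖ := by
          rw [norm_smul, norm_smul, Real.norm_eq_abs, Real.norm_eq_abs,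
            abs_of_nonneg (by linarith), abs_of_nonneg hak0.le]
  have hTnorm : Tendsto (fun k => ‖T k‖) atTop (nhds 0) :=
    aux_avg (fun k => ‖T k‖) (fun k => ‖g k‖) a (fun k => norm_nonneg _)
      ha0 ha1 hdiv (by simpa using hg0.norm) hnorm
  have hT0 : Tendsto T atTop (nhds 0) := tendsto_zero_iff_norm_tendsto_zero.mpr hTnorm
  have hr0 : Tendsto (fun k => r (k+1)) atTop (nhds 0) := by
    have := hg0.add hT0
    simp only [add_zero] at this
    exact this.congr (fun k => (hr k).symm)
  have hrn : Tendsto (fun k => ‖r (k+1)‖) atTop (nhds 0) := by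
    simpa using hr0.norm
  exact (Filter.tendsto_add_atTop_iff_nat 1).mp hrn
end

section
/- Under the stated assumptions, Σ_{k=1}^{∞} 1/t_k = +∞. -/
open Filter

/-- Lemma A.7: divergence of the harmonic-type sum for scaled parameter sequences. -/
theorem stmt_17
    (t ξ : ℕ → ℝ) (ρ : ℝ)
    (hρ0 : 0 < ρ) (hρ1 : ρ ≤ 1)
    (ht : ∀ k ≥ 1, 1 ≤ t k) (hξ : ∀ k ≥ 1, 1 ≤ ξ k)
    (hmono : ∀ k ≥ 1, t k^2 * ξ k ≤ t (k+1)^2 * ξ (k+1))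
    (hinf : Filter.Tendsto (fun k => t k^2 * ξ k) Filter.atTop Filter.atTop)
    (hgrow : ∀ k ≥ 1, t (k+1)^2 * ξ (k+1) - t k^2 * ξ k ≤ ρ * (t (k+1) * ξ (k+1))) :
    Filter.Tendsto (fun K => ∑ k ∈ Finset.Icc 1 K, 1 / t k) Filter.atTop Filter.atTop := by
  set a : ℕ → ℝ := fun k => t k ^ 2 * ξ k with ha
  have ha1 : ∀ k, 1 ≤ k → 1 ≤ a k := by
    intro k hk
    have h1 := ht k hk
    have h2 := hξ k hk
    have : (1:ℝ) * 1 ≤ t k ^ 2 * ξ k := by nlinarith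
    simpa [ha] using this
  have hapos : ∀ k, 1 ≤ k → 0 < a k := fun k hk => lt_of_lt_of_le one_pos (ha1 k hk)
  have htpos : ∀ k, 1 ≤ k → 0 < t k := fun k hk => lt_of_lt_of_le one_pos (ht k hk)
  have hamono : ∀ n, 1 ≤ n → ∀ m, n ≤ m → a n ≤ a m := by
    intro n hn m hm
    induction m, hm using Nat.le_induction with
    | base => exact le_rfl
    | succ m hm ih => exact le_trans ih (hmono m (le_trans hn hm))
  have hstep : ∀ k, 1 ≤ k → (a (k+1) - a k) * t (k+1) ≤ ρ * a (k+1) := by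
    intro k hk
    have hg := hgrow k hk
    have ht1 : (1:ℝ) ≤ t (k+1) := ht (k+1) (by omega)
    have hmul := mul_le_mul_of_nonneg_right hg (le_of_lt (lt_of_lt_of_le one_pos ht1))
    calc (a (k+1) - a k) * t (k+1)
        = (t (k+1)^2 * ξ (k+1) - t k^2 * ξ k) * t (k+1) := by rw [ha]
      _ ≤ ρ * (t (k+1) * ξ (k+1)) * t (k+1) := hmul
      _ = ρ * a (k+1) := by rw [ha]; ring
  -- key telescoping bound
  have key : ∀ n, 1 ≤ n → ∀ m, n ≤ m →
      (a m - a n) / (ρ * a m) ≤ ∑ k ∈ Finset.Ioc n m, 1 / t k := by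
    intro n hn m hm
    induction m, hm using Nat.le_induction with
    | base => simp
    | succ m hm ih =>
      rw [Finset.sum_Ioc_succ_top hm]
      have hm1 : 1 ≤ m := le_trans hn hm
      have hpos1 : 0 < ρ * a m := mul_pos hρ0 (hapos m hm1)
      have hpos2 : 0 < ρ * a (m+1) := mul_pos hρ0 (hapos (m+1) (by omega))
      have hle : a m ≤ a (m+1) := hmono m hm1
      have h1 : (a (m+1) - a m) / (ρ * a (m+1)) ≤ 1 / t (m+1) := by
        rw [div_le_div_iff₀ hpos2 (htpos (m+1) (by omega))]
        have := hstep m hm1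
        linarith
      have hnum : 0 ≤ a m - a n := sub_nonneg.mpr (hamono n hn m hm)
      have h2 : (a m - a n) / (ρ * a (m+1)) ≤ (a m - a n) / (ρ * a m) := by
        gcongr
      have heq : (a (m+1) - a n) / (ρ * a (m+1))
          = (a (m+1) - a m) / (ρ * a (m+1)) + (a m - a n) / (ρ * a (m+1)) := by
        rw [← add_div]; ring_nf
      rw [heq]
      linarith
  -- partial sums
  set S : ℕ → ℝ := fun K => ∑ k ∈ Finset.Icc 1 K, 1 / t k with hS
  have hSmono : Monotone S := by
    intro K L hKL
    apply Finset.sum_le_sum_of_subset_of_nonneg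
    · exact Finset.Icc_subset_Icc le_rfl hKL
    · intro i hi _
      have hi1 : 1 ≤ i := (Finset.mem_Icc.mp hi).1
      have := htpos i hi1
      positivity
  have hsplit : ∀ K m, 1 ≤ K → K ≤ m → S m = S K + ∑ k ∈ Finset.Ioc K m, 1 / t k := by
    intro K m hK hKm
    have hu : Finset.Icc 1 m = Finset.Icc 1 K ∪ Finset.Ioc K m := by
      ext i
      simp only [Finset.mem_Icc, Finset.mem_union, Finset.mem_Ioc]
      omega
    have hd : Disjoint (Finset.Icc 1 K) (Finset.Ioc K m) := by
      rw [Finset.disjoint_left]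
      intro i hi hi'
      simp only [Finset.mem_Icc, Finset.mem_Ioc] at hi hi'
      omega
    rw [hS]
    simp only
    rw [hu, Finset.sum_union hd]
  have hub : ∀ n : ℕ, ∃ K, 1 ≤ K ∧ (n : ℝ) / 2 ≤ S K := by
    intro n
    induction n with
    | zero =>
      refine ⟨1, le_rfl, ?_⟩
      have hS1 : S 1 = 1 / t 1 := by simp [hS]
      rw [hS1]
      have := htpos 1 le_rfl
      simp
      positivity
    | succ n ih =>
      obtain ⟨K, hK1, hK⟩ := ih
      obtain ⟨M, hM⟩ := Filter.eventually_atTop.mp (hinf.eventually_ge_atTop (2 * a K))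
      refine ⟨max M K, le_trans hK1 (le_max_right M K), ?_⟩
      have hKm : K ≤ max M K := le_max_right M K
      have hm1 : 1 ≤ max M K := le_trans hK1 hKm
      have h2a : 2 * a K ≤ a (max M K) := hM (max M K) (le_max_left M K)
      have hkey := key K hK1 (max M K) hKm
      have hhalf : (1:ℝ)/2 ≤ (a (max M K) - a K) / (ρ * a (max M K)) := by
        rw [le_div_iff₀ (mul_pos hρ0 (hapos _ hm1))]
        have h3 := hapos (max M K) hm1
        nlinarith
      rw [hsplit K (max M K) hK1 hKm]
      push_cast
      linarith
  apply tendsto_atTop_atTop_of_monotone hSmono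
  intro b
  obtain ⟨n, hn⟩ := exists_nat_ge (2 * b)
  obtain ⟨K, _, hK⟩ := hub n
  exact ⟨K, le_trans (by linarith) hK⟩
end
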